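/- arXiv:2111.03192 — 10 statements merged into one kernel-verified Lean document; each statement's English description precedes it below -/
import Mathlib

section
/- Let n ≥ 4. Then there exist an integer m ≥ 1, an integer P < n, homogeneous polynomials f₁,…,f_P and g of degree m in ℂ[z₁,…,zₙ] with {f₁,…,f_P, g} linearly independent over ℂ, and polynomials h₁,…,h_ρ in ℂ[z₁,…,zₙ], such that (Σ_{k=1}^P |f_k(z)|² − |g(z)|²)·‖z‖² = Σ_{k=1}^ρ |h_k(z)|² for all z ∈ ℂⁿ, where ‖z‖² = Σ_{j=1}^n |z_j|². That is, a real bihomogeneous polynomial of signature (P,1) with P < n for which r(z,z̄)‖z‖² is a squared norm exists when n ≥ 4. -/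
open MvPolynomial

noncomputable section SigP1Aux

namespace SigP1Aux

variable (N : ℕ)

def I0 : Fin (4 + N) := ⟨0, by omega⟩
def I1 : Fin (4 + N) := ⟨1, by omega⟩
def I2 : Fin (4 + N) := ⟨2, by omega⟩
def I3 : Fin (4 + N) := ⟨3, by omega⟩
def em (j : Fin N) : Fin (4 + N) := ⟨4 + j, by omega⟩

/-- the three "core" quadratics `3 z₀z₂`, `3 z₁z₃`, `2 z₀z₃ + 2 z₁z₂`. -/
def pA : Fin 3 → MvPolynomial (Fin (4 + N)) ℂ :=
  ![C 3 * (X (I0 N) * X (I2 N)),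
    C 3 * (X (I1 N) * X (I3 N)),
    C 2 * (X (I0 N) * X (I3 N)) + C 2 * (X (I1 N) * X (I2 N))]

/-- the tail quadratics `2(z₀+z₁) z_j`. -/
def qT (j : Fin N) : MvPolynomial (Fin (4 + N)) ℂ :=
  (C 2 * (X (I0 N) + X (I1 N))) * X (em N j)

def fF : Fin (3 + N) → MvPolynomial (Fin (4 + N)) ℂ := Fin.append (pA N) (qT N)

def gG : MvPolynomial (Fin (4 + N)) ℂ := X (I0 N) * X (I3 N) - X (I1 N) * X (I2 N)

def hA : Fin 12 → MvPolynomial (Fin (4 + N)) ℂ :=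
  ![C 3 * (X (I1 N) * (X (I3 N) * X (I3 N))),
    C ((Real.sqrt (1/12) : ℝ) : ℂ) *
      (C 12 * (X (I1 N) * (X (I2 N) * X (I3 N))) + C 5 * (X (I0 N) * (X (I3 N) * X (I3 N)))),
    C ((Real.sqrt (1/3) : ℝ) : ℂ) *
      (C 3 * (X (I1 N) * (X (I2 N) * X (I2 N))) + C 5 * (X (I0 N) * (X (I2 N) * X (I3 N)))),
    C 3 * (X (I1 N) * (X (I1 N) * X (I3 N))),
    C ((Real.sqrt (1/3) : ℝ) : ℂ) *
      (C 3 * (X (I1 N) * (X (I1 N) * X (I2 N))) + C 5 * (X (I0 N) * (X (I1 N) * X (I3 N)))),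
    C ((Real.sqrt (11/12) : ℝ) : ℂ) * (X (I0 N) * (X (I3 N) * X (I3 N))),
    C ((Real.sqrt (11/3) : ℝ) : ℂ) * (X (I0 N) * (X (I2 N) * X (I3 N))),
    C 3 * (X (I0 N) * (X (I2 N) * X (I2 N))),
    C ((Real.sqrt (11/3) : ℝ) : ℂ) * (X (I0 N) * (X (I1 N) * X (I3 N))),
    C ((Real.sqrt (1/12) : ℝ) : ℂ) *
      (C 12 * (X (I0 N) * (X (I1 N) * X (I2 N))) + C 5 * (X (I0 N) * (X (I0 N) * X (I3 N)))),
    C ((Real.sqrt (11/12) : ℝ) : ℂ) * (X (I0 N) * (X (I0 N) * X (I3 N))),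
    C 3 * (X (I0 N) * (X (I0 N) * X (I2 N)))]

def hB6 : Fin 6 → MvPolynomial (Fin (4 + N)) ℂ :=
  ![C ((Real.sqrt (1/13) : ℝ) : ℂ) *
      (C 13 * (X (I1 N) * X (I3 N)) + C 4 * (X (I0 N) * X (I3 N))),
    C ((Real.sqrt (1/7) : ℝ) : ℂ) *
      (C 7 * (X (I1 N) * X (I2 N)) + C 5 * (X (I0 N) * X (I3 N)) + C 4 * (X (I0 N) * X (I2 N))),
    C 2 * (X (I1 N) * X (I1 N)) + C 2 * (X (I0 N) * X (I1 N)),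
    C ((Real.sqrt (2/91) : ℝ) : ℂ) *
      (C 10 * (X (I0 N) * X (I3 N)) - C 13 * (X (I0 N) * X (I2 N))),
    C ((Real.sqrt (7) : ℝ) : ℂ) * (X (I0 N) * X (I2 N)),
    C 2 * (X (I0 N) * X (I1 N)) + C 2 * (X (I0 N) * X (I0 N))]

def hBB : Fin (N * 6) → MvPolynomial (Fin (4 + N)) ℂ := fun k =>
  X (em N (finProdFinEquiv.symm k).1) * hB6 N (finProdFinEquiv.symm k).2

def hCC : Fin (N * N) → MvPolynomial (Fin (4 + N)) ℂ := fun k =>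
  (C 2 * (X (I0 N) + X (I1 N))) *
    (X (em N (finProdFinEquiv.symm k).1) * X (em N (finProdFinEquiv.symm k).2))

def hH : Fin (12 + N * 6 + N * N) → MvPolynomial (Fin (4 + N)) ℂ :=
  Fin.append (Fin.append (hA N) (hBB N)) (hCC N)

lemma sqw (w : ℝ) (hw : 0 ≤ w) (u : ℂ) :
    Complex.normSq ((w.sqrt : ℂ) * u) = w * Complex.normSq u := by
  rw [Complex.normSq_mul, Complex.normSq_ofReal, Real.mul_self_sqrt hw]

lemma nsq_sqrt (w : ℝ) (hw : 0 ≤ w) : Complex.normSq ((w.sqrt : ℝ) : ℂ) = w := by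
  rw [Complex.normSq_ofReal, Real.mul_self_sqrt hw]



lemma fF_hom (N : ℕ) (k : Fin (3 + N)) : (fF N k).IsHomogeneous 2 := by
  refine Fin.addCases (motive := fun k => (fF N k).IsHomogeneous 2) ?_ ?_ k
  · intro i
    rw [fF, Fin.append_left]
    fin_cases i
    · exact (isHomogeneous_C _ _).mul ((isHomogeneous_X _ _).mul (isHomogeneous_X _ _))
    · exact (isHomogeneous_C _ _).mul ((isHomogeneous_X _ _).mul (isHomogeneous_X _ _))
    · exact ((isHomogeneous_C _ _).mul ((isHomogeneous_X _ _).mul (isHomogeneous_X _ _))).add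
        ((isHomogeneous_C _ _).mul ((isHomogeneous_X _ _).mul (isHomogeneous_X _ _)))
  · intro j
    rw [fF, Fin.append_right]
    exact ((isHomogeneous_C _ _).mul ((isHomogeneous_X _ _).add (isHomogeneous_X _ _))).mul
      (isHomogeneous_X _ _)

lemma gG_hom (N : ℕ) : (gG N).IsHomogeneous 2 :=
  ((isHomogeneous_X _ _).mul (isHomogeneous_X _ _)).sub
    ((isHomogeneous_X _ _).mul (isHomogeneous_X _ _))



def pt (N u v : ℕ) : Fin (4 + N) → ℂ := fun t => if (t : ℕ) = u ∨ (t : ℕ) = v then 1 else 0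

lemma lin_indep (N : ℕ) :
    LinearIndependent ℂ (Fin.snoc (fF N) (gG N) : Fin (3 + N + 1) → MvPolynomial (Fin (4 + N)) ℂ) := by
  rw [Fintype.linearIndependent_iff]
  intro c hc
  have E : ∀ w : Fin (4 + N) → ℂ,
      c ((Fin.castAdd N (0 : Fin 3)).castSucc) * (3 * (w (I0 N) * w (I2 N)))
      + c ((Fin.castAdd N (1 : Fin 3)).castSucc) * (3 * (w (I1 N) * w (I3 N)))
      + c ((Fin.castAdd N (2 : Fin 3)).castSucc) *
          (2 * (w (I0 N) * w (I3 N)) + 2 * (w (I1 N) * w (I2 N)))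
      + (∑ j : Fin N, c ((Fin.natAdd 3 j).castSucc) *
          ((2 * (w (I0 N) + w (I1 N))) * w (em N j)))
      + c (Fin.last (3 + N)) * (w (I0 N) * w (I3 N) - w (I1 N) * w (I2 N)) = 0 := by
    intro w
    have h0 := congrArg (eval w) hc
    rw [map_sum, map_zero] at h0
    simp only [smul_eq_C_mul, map_mul, eval_C] at h0
    rw [Fin.sum_univ_castSucc] at h0
    simp only [Fin.snoc_castSucc, Fin.snoc_last] at h0
    rw [Fin.sum_univ_add, Fin.sum_univ_three] at h0
    simp only [fF, Fin.append_left, Fin.append_right, pA, gG, qT,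
      Matrix.cons_val_zero, Matrix.cons_val_one, Matrix.head_cons, Matrix.cons_val_two,
      Matrix.tail_cons, map_mul, map_add, map_sub, eval_C, eval_X] at h0
    convert h0 using 2 <;> ring
  have pv : ∀ (u v k : ℕ) (hk : k < 4 + N),
      pt N u v (⟨k, hk⟩ : Fin (4 + N)) = if (k = u ∨ k = v) then 1 else 0 := fun _ _ _ _ => rfl
  have pem : ∀ (u v : ℕ) (j : Fin N), pt N u v (em N j) =
      if (4 + (j : ℕ) = u ∨ 4 + (j : ℕ) = v) then 1 else 0 := fun _ _ _ => rfl
  have tz : ∀ (u v : ℕ), u < 4 → v < 4 →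
      (∑ j : Fin N, c ((Fin.natAdd 3 j).castSucc) *
          ((2 * (pt N u v (I0 N) + pt N u v (I1 N))) * pt N u v (em N j))) = 0 := by
    intro u v hu hv
    refine Finset.sum_eq_zero fun x _ => ?_
    have hx : pt N u v (em N x) = 0 := by rw [pem, if_neg (by omega)]
    rw [hx, mul_zero, mul_zero]
  have E02 := E (pt N 0 2)
  have E13 := E (pt N 1 3)
  have E03 := E (pt N 0 3)
  have E12 := E (pt N 1 2)
  rw [tz 0 2 (by norm_num) (by norm_num)] at E02
  rw [tz 1 3 (by norm_num) (by norm_num)] at E13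
  rw [tz 0 3 (by norm_num) (by norm_num)] at E03
  rw [tz 1 2 (by norm_num) (by norm_num)] at E12
  simp only [I0, I1, I2, I3, pv] at E02 E13 E03 E12
  norm_num at E02 E13 E03 E12
  intro i
  refine Fin.lastCases ?_ (fun i => ?_) i
  · linear_combination (E03 - E12) / 2
  · refine Fin.addCases (motive := fun i => c i.castSucc = 0) ?_ ?_ i
    · intro i
      fin_cases i
      · exact E02
      · exact E13
      · show c ((Fin.castAdd N (2 : Fin 3)).castSucc) = 0
        linear_combination (E03 + E12) / 4
    · intro j
      have Ej := E (pt N 0 (4 + (j : ℕ)))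
      have pemj : ∀ j' : Fin N, pt N 0 (4 + (j : ℕ)) (em N j') = if j' = j then 1 else 0 := by
        intro j'
        rw [pem]
        by_cases h : j' = j
        · subst h; rw [if_pos (Or.inr rfl), if_pos rfl]
        · rw [if_neg, if_neg h]
          have := Fin.val_ne_of_ne h
          omega
      have p0 : pt N 0 (4 + (j : ℕ)) (I0 N) = 1 := by
        show (if ((0:ℕ) = 0 ∨ (0:ℕ) = 4 + (j : ℕ)) then (1:ℂ) else 0) = 1
        rw [if_pos (Or.inl rfl)]
      have p1 : pt N 0 (4 + (j : ℕ)) (I1 N) = 0 := by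
        show (if ((1:ℕ) = 0 ∨ (1:ℕ) = 4 + (j : ℕ)) then (1:ℂ) else 0) = 0
        rw [if_neg (by omega)]
      have p2 : pt N 0 (4 + (j : ℕ)) (I2 N) = 0 := by
        show (if ((2:ℕ) = 0 ∨ (2:ℕ) = 4 + (j : ℕ)) then (1:ℂ) else 0) = 0
        rw [if_neg (by omega)]
      have p3 : pt N 0 (4 + (j : ℕ)) (I3 N) = 0 := by
        show (if ((3:ℕ) = 0 ∨ (3:ℕ) = 4 + (j : ℕ)) then (1:ℂ) else 0) = 0
        rw [if_neg (by omega)]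
      have hsum : (∑ x : Fin N, c ((Fin.natAdd 3 x).castSucc) *
          ((2 * (pt N 0 (4 + (j : ℕ)) (I0 N) + pt N 0 (4 + (j : ℕ)) (I1 N))) *
            pt N 0 (4 + (j : ℕ)) (em N x)))
          = c ((Fin.natAdd 3 j).castSucc) * 2 := by
        have hterm : ∀ x : Fin N, c ((Fin.natAdd 3 x).castSucc) *
            ((2 * (pt N 0 (4 + (j : ℕ)) (I0 N) + pt N 0 (4 + (j : ℕ)) (I1 N))) *
              pt N 0 (4 + (j : ℕ)) (em N x))
            = if x = j then c ((Fin.natAdd 3 x).castSucc) * 2 else 0 := by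
          intro x
          rw [p0, p1, pemj x]
          by_cases h : x = j
          · rw [if_pos h, if_pos h]; ring
          · rw [if_neg h, if_neg h]; ring
        rw [Finset.sum_congr rfl (fun x _ => hterm x), Finset.sum_ite_eq' Finset.univ j]
        simp
      rw [hsum, p0, p1, p2, p3] at Ej
      linear_combination Ej / 2



lemma main_id (N : ℕ) (z : Fin (4 + N) → ℂ) :
    ((∑ k, Complex.normSq (eval z (fF N k))) - Complex.normSq (eval z (gG N))) *
        (∑ j, Complex.normSq (z j)) = ∑ k, Complex.normSq (eval z (hH N k)) := by
  have hnorm : (∑ j : Fin (4 + N), Complex.normSq (z j)) =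
      Complex.normSq (z (I0 N)) + Complex.normSq (z (I1 N)) + Complex.normSq (z (I2 N)) +
        Complex.normSq (z (I3 N)) + ∑ j : Fin N, Complex.normSq (z (em N j)) := by
    rw [Fin.sum_univ_add, Fin.sum_univ_four]
    rfl
  have htail : (∑ x : Fin N, Complex.normSq (eval z (fF N (Fin.natAdd 3 x)))) =
      Complex.normSq (2 * (z (I0 N) + z (I1 N))) * ∑ j : Fin N, Complex.normSq (z (em N j)) := by
    calc (∑ x : Fin N, Complex.normSq (eval z (fF N (Fin.natAdd 3 x))))
        = ∑ j : Fin N, Complex.normSq (2 * (z (I0 N) + z (I1 N))) * Complex.normSq (z (em N j)) := by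
          refine Finset.sum_congr rfl fun j _ => ?_
          rw [show fF N (Fin.natAdd 3 j) = qT N j from Fin.append_right _ _ _]
          rw [show eval z (qT N j) = (2 * (z (I0 N) + z (I1 N))) * z (em N j) by
            simp only [qT, map_mul, map_add, eval_C, eval_X]]
          rw [Complex.normSq_mul]
      _ = _ := by rw [← Finset.mul_sum]
  have hfs : (∑ k : Fin (3 + N), Complex.normSq (eval z (fF N k))) =
      Complex.normSq (eval z (pA N 0)) + Complex.normSq (eval z (pA N 1)) +
        Complex.normSq (eval z (pA N 2)) +
        Complex.normSq (2 * (z (I0 N) + z (I1 N))) * ∑ j : Fin N, Complex.normSq (z (em N j)) := by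
    rw [Fin.sum_univ_add, Fin.sum_univ_three, htail]
    rw [show fF N (Fin.castAdd N 0) = pA N 0 from Fin.append_left _ _ _]
    rw [show fF N (Fin.castAdd N 1) = pA N 1 from Fin.append_left _ _ _]
    rw [show fF N (Fin.castAdd N 2) = pA N 2 from Fin.append_left _ _ _]
  have hhs : (∑ k : Fin (12 + N * 6 + N * N), Complex.normSq (eval z (hH N k))) =
      (∑ i : Fin 12, Complex.normSq (eval z (hA N i)))
      + (∑ j : Fin N, Complex.normSq (z (em N j))) *
          (∑ i : Fin 6, Complex.normSq (eval z (hB6 N i)))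
      + Complex.normSq (2 * (z (I0 N) + z (I1 N))) *
          ((∑ j : Fin N, Complex.normSq (z (em N j))) *
            (∑ j : Fin N, Complex.normSq (z (em N j)))) := by
    rw [Fin.sum_univ_add, Fin.sum_univ_add]
    simp only [hH, Fin.append_left, Fin.append_right]
    congr 1
    · congr 1
      -- B block
      have e1 : (∑ k : Fin (N * 6), Complex.normSq (eval z (hBB N k)))
          = ∑ p : Fin N × Fin 6, Complex.normSq (eval z (X (em N p.1) * hB6 N p.2)) := by
        simp only [hBB]
        exact Equiv.sum_comp finProdFinEquiv.symm
          (fun p : Fin N × Fin 6 => Complex.normSq (eval z (X (em N p.1) * hB6 N p.2)))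
      rw [e1, Fintype.sum_prod_type]
      calc (∑ j : Fin N, ∑ i : Fin 6, Complex.normSq (eval z (X (em N j) * hB6 N i)))
          = ∑ j : Fin N, Complex.normSq (z (em N j)) *
              (∑ i : Fin 6, Complex.normSq (eval z (hB6 N i))) := by
            refine Finset.sum_congr rfl fun j _ => ?_
            rw [Finset.mul_sum]
            refine Finset.sum_congr rfl fun i _ => ?_
            rw [map_mul, eval_X, Complex.normSq_mul]
        _ = _ := by rw [← Finset.sum_mul]
    · -- C block
      have e1 : (∑ k : Fin (N * N), Complex.normSq (eval z (hCC N k)))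
          = ∑ p : Fin N × Fin N, Complex.normSq (eval z
              ((C 2 * (X (I0 N) + X (I1 N))) * (X (em N p.1) * X (em N p.2)))) := by
        simp only [hCC]
        exact Equiv.sum_comp finProdFinEquiv.symm
          (fun p : Fin N × Fin N => Complex.normSq (eval z
            ((C 2 * (X (I0 N) + X (I1 N))) * (X (em N p.1) * X (em N p.2)))))
      rw [e1, Fintype.sum_prod_type]
      calc (∑ j : Fin N, ∑ j' : Fin N, Complex.normSq (eval z
              ((C 2 * (X (I0 N) + X (I1 N))) * (X (em N j) * X (em N j')))))
          = ∑ j : Fin N, ∑ j' : Fin N, Complex.normSq (2 * (z (I0 N) + z (I1 N))) *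
              (Complex.normSq (z (em N j)) * Complex.normSq (z (em N j'))) := by
            refine Finset.sum_congr rfl fun j _ => Finset.sum_congr rfl fun j' _ => ?_
            rw [show eval z ((C 2 * (X (I0 N) + X (I1 N))) * (X (em N j) * X (em N j')))
                = (2 * (z (I0 N) + z (I1 N))) * (z (em N j) * z (em N j')) by
              simp only [map_mul, map_add, eval_C, eval_X]]
            rw [Complex.normSq_mul, Complex.normSq_mul (z (em N j)) (z (em N j'))]
        _ = ∑ j : Fin N, Complex.normSq (2 * (z (I0 N) + z (I1 N))) *
              (Complex.normSq (z (em N j)) * ∑ j' : Fin N, Complex.normSq (z (em N j'))) :=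
            Finset.sum_congr rfl fun j _ => by rw [← Finset.mul_sum, ← Finset.mul_sum]
        _ = _ := by rw [← Finset.mul_sum, ← Finset.sum_mul]
  rw [hfs, hnorm, hhs]
  simp only [pA, hA, hB6, gG, Matrix.cons_val_zero, Matrix.cons_val_one, Matrix.head_cons,
    Matrix.cons_val_two, Matrix.tail_cons, Fin.sum_univ_succ, Fin.sum_univ_zero,
    Matrix.cons_val_succ, add_zero, map_mul, map_add, map_sub, eval_C, eval_X]
  simp only [nsq_sqrt (1/12 : ℝ) (by norm_num), nsq_sqrt (1/3 : ℝ) (by norm_num),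
    nsq_sqrt (11/12 : ℝ) (by norm_num), nsq_sqrt (11/3 : ℝ) (by norm_num),
    nsq_sqrt (1/13 : ℝ) (by norm_num), nsq_sqrt (1/7 : ℝ) (by norm_num),
    nsq_sqrt (2/91 : ℝ) (by norm_num), nsq_sqrt (7 : ℝ) (by norm_num)]
  generalize (∑ j : Fin N, Complex.normSq (z (em N j))) = T
  simp only [Complex.normSq_apply, Complex.mul_re, Complex.mul_im, Complex.add_re,
    Complex.add_im, Complex.sub_re, Complex.sub_im, Complex.re_ofNat, Complex.im_ofNat]
  ring


end SigP1Aux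

end SigP1Aux

/-- For `n ≥ 4` there is a real bihomogeneous polynomial of signature
`(P,1)` with `P < n` such that `r(z,z̄)‖z‖²` is a squared norm. -/
theorem sig_P1_exists_P_lt_n (n : ℕ) (hn : 4 ≤ n) :
    ∃ (m P : ℕ), 1 ≤ m ∧ P < n ∧
      ∃ (f : Fin P → MvPolynomial (Fin n) ℂ) (g : MvPolynomial (Fin n) ℂ),
        (∀ k, (f k).IsHomogeneous m) ∧ g.IsHomogeneous m ∧
        LinearIndependent ℂ (Fin.snoc f g : Fin (P + 1) → MvPolynomial (Fin n) ℂ) ∧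
        ∃ (ρ : ℕ) (h : Fin ρ → MvPolynomial (Fin n) ℂ),
          ∀ z : Fin n → ℂ,
            ((∑ k, Complex.normSq (eval z (f k))) - Complex.normSq (eval z g)) *
              (∑ j, Complex.normSq (z j)) = ∑ k, Complex.normSq (eval z (h k)) := by
  obtain ⟨N, rfl⟩ : ∃ N, n = 4 + N := ⟨n - 4, by omega⟩
  exact ⟨2, 3 + N, one_le_two, by omega, SigP1Aux.fF N, SigP1Aux.gG N,
    SigP1Aux.fF_hom N, SigP1Aux.gG_hom N, SigP1Aux.lin_indep N,
    ⟨12 + N * 6 + N * N, SigP1Aux.hH N, SigP1Aux.main_id N⟩⟩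
end

section
/- Let f₁,…,f_P and g₁,…,g_N be homogeneous polynomials of degree m in ℂ[z₁,…,zₙ], and set r(z) = Σ_{k=1}^P |f_k(z)|² − Σ_{k=1}^N |g_k(z)|². Suppose there exist polynomials h₁,…,h_ρ in ℂ[z₁,…,zₙ] such that r(z)·‖z‖² = Σ_{k=1}^ρ |h_k(z)|² for all z ∈ ℂⁿ, where ‖z‖² = Σ_{j=1}^n |z_j|². Let I⁺ be the ideal of ℂ[z₁,…,zₙ] generated by f₁,…,f_P and I⁻ the ideal generated by g₁,…,g_N. Then the degree-(m+1) homogeneous component of I⁻ is contained in the degree-(m+1) homogeneous component of I⁺; equivalently, for every k ∈ {1,…,N} and every j ∈ {1,…,n}, the polynomial z_j · g_k lies in I⁺. -/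
open MvPolynomial

noncomputable section


lemma real_part_decomp {σ : Type*} (q : MvPolynomial σ ℂ) :
    q = map (algebraMap ℝ ℂ) (∑ d ∈ q.support, monomial d ((q.coeff d).re))
      + Complex.I • map (algebraMap ℝ ℂ) (∑ d ∈ q.support, monomial d ((q.coeff d).im)) := by
  classical
  ext d
  simp only [coeff_add, coeff_smul, map_sum, map_monomial, coeff_sum, coeff_monomial, apply_ite]
  rw [Finset.sum_ite_eq' (q.support) d, Finset.sum_ite_eq' (q.support) d]
  by_cases hd : d ∈ q.support
  · simp [hd, Complex.ext_iff]
  · have : q.coeff d = 0 := by simpa [mem_support_iff] using hd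
    simp [hd, this]

lemma eq_zero_of_eval_real_zero {σ : Type*} (q : MvPolynomial σ ℂ)
    (hq : ∀ x : σ → ℝ, eval (fun i => (x i : ℂ)) q = 0) : q = 0 := by
  set q1 := ∑ d ∈ q.support, monomial d ((q.coeff d).re) with hq1
  set q2 := ∑ d ∈ q.support, monomial d ((q.coeff d).im) with hq2
  have key : ∀ (p : MvPolynomial σ ℝ) (x : σ → ℝ),
      eval (fun i => (x i : ℂ)) (map (algebraMap ℝ ℂ) p) = ((eval x p : ℝ) : ℂ) := by
    intro p x
    rw [eval_map]
    rw [show ((eval x p : ℝ) : ℂ) = (algebraMap ℝ ℂ) (eval x p) from rfl]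
    rw [show eval x p = eval₂Hom (RingHom.id ℝ) x p from rfl]
    rw [map_eval₂Hom]
    rfl
  have h12 : ∀ x : σ → ℝ, eval x q1 = 0 ∧ eval x q2 = 0 := by
    intro x
    have := hq x
    rw [real_part_decomp q] at this
    simp only [map_add, smul_eq_C_mul, map_mul, ← hq1, ← hq2] at this
    rw [eval_C] at this
    rw [key q1 x, key q2 x] at this
    have hre := congrArg Complex.re this
    have him := congrArg Complex.im this
    simp at hre him
    exact ⟨hre, him⟩
  have e1 : q1 = 0 := funext fun x => by simpa using (h12 x).1
  have e2 : q2 = 0 := funext fun x => by simpa using (h12 x).2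
  rw [real_part_decomp q, ← hq1, ← hq2, e1, e2]
  simp



lemma polarize {n : ℕ} (q : MvPolynomial (Fin n ⊕ Fin n) ℂ)
    (hq : ∀ z : Fin n → ℂ,
      eval (Sum.elim z (fun j => (starRingEnd ℂ) (z j))) q = 0) : q = 0 := by
  set t : Fin n ⊕ Fin n → MvPolynomial (Fin n ⊕ Fin n) ℂ :=
    Sum.elim (fun j => X (Sum.inl j) + Complex.I • X (Sum.inr j))
      (fun j => X (Sum.inl j) - Complex.I • X (Sum.inr j)) with ht
  set s : Fin n ⊕ Fin n → MvPolynomial (Fin n ⊕ Fin n) ℂ :=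
    Sum.elim (fun j => (2:ℂ)⁻¹ • (X (Sum.inl j) + X (Sum.inr j)))
      (fun j => (2*Complex.I)⁻¹ • (X (Sum.inl j) - X (Sum.inr j))) with hs
  have hTq : (bind₁ t) q = 0 := by
    apply eq_zero_of_eval_real_zero
    intro x
    rw [show (eval (fun i => (x i : ℂ))) = ⇑(eval₂Hom (RingHom.id ℂ) (fun i => (x i : ℂ))) from rfl,
      eval₂Hom_bind₁]
    have := hq (fun j => (x (Sum.inl j) : ℂ) + Complex.I * (x (Sum.inr j) : ℂ))
    have hpt : (fun i => (eval₂Hom (RingHom.id ℂ) fun i => ((x i : ℝ) : ℂ)) (t i))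
        = Sum.elim (fun j => (x (Sum.inl j) : ℂ) + Complex.I * (x (Sum.inr j) : ℂ))
          (fun j => (starRingEnd ℂ) ((x (Sum.inl j) : ℂ) + Complex.I * (x (Sum.inr j) : ℂ))) := by
      funext i
      cases i with
      | inl j => simp [ht, smul_eq_C_mul]
      | inr j =>
        simp [ht, smul_eq_C_mul, map_add, map_mul, Complex.conj_ofReal, Complex.conj_I]
        ring
    rw [hpt]
    exact this
  have hst : (fun i => (bind₁ s) (t i)) = X := by
    funext i
    cases i with
    | inl j =>
      simp only [ht, hs, Sum.elim_inl, Sum.elim_inr, map_add, map_smul, bind₁_X_right]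
      rw [smul_smul]
      have : Complex.I * (2*Complex.I)⁻¹ = 2⁻¹ := by
        field_simp
      rw [this, ← smul_add]
      have : ((X (Sum.inl j) + X (Sum.inr j)) + (X (Sum.inl j) - X (Sum.inr j)) : MvPolynomial (Fin n ⊕ Fin n) ℂ)
          = X (Sum.inl j) + X (Sum.inl j) := by ring
      rw [this, smul_add, ← add_smul]
      norm_num
    | inr j =>
      simp only [ht, hs, Sum.elim_inl, Sum.elim_inr, map_sub, map_smul, bind₁_X_right]
      rw [smul_smul]
      have : Complex.I * (2*Complex.I)⁻¹ = 2⁻¹ := by field_simp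
      rw [this, ← smul_sub]
      have : ((X (Sum.inl j) + X (Sum.inr j)) - (X (Sum.inl j) - X (Sum.inr j)) : MvPolynomial (Fin n ⊕ Fin n) ℂ)
          = X (Sum.inr j) + X (Sum.inr j) := by ring
      rw [this, smul_add, ← add_smul]
      norm_num
  calc q = (bind₁ X) q := by rw [bind₁_X_left]; rfl
    _ = (bind₁ s) ((bind₁ t) q) := by rw [bind₁_bind₁, hst]
    _ = 0 := by rw [hTq, map_zero]



lemma conj_eval {n : ℕ} (z : Fin n → ℂ) (p : MvPolynomial (Fin n) ℂ) :
    (starRingEnd ℂ) (eval z p)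
      = eval (fun j => (starRingEnd ℂ) (z j)) (map (starRingEnd ℂ) p) := by
  rw [eval_map]
  rw [show eval z p = eval₂Hom (RingHom.id ℂ) z p from rfl, map_eval₂Hom]
  rfl

set_option synthInstance.maxHeartbeats 1000000 in
lemma hermitian_span {n : ℕ} {ι κ : Type*} [Fintype ι] [Fintype κ]
    (A : ι → MvPolynomial (Fin n) ℂ) (C : κ → MvPolynomial (Fin n) ℂ)
    (hyp : ∀ z : Fin n → ℂ,
      ∑ i, Complex.normSq (eval z (A i)) = ∑ c, Complex.normSq (eval z (C c))) :
    ∀ c, C c ∈ Submodule.span ℂ (Set.range A) := by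
  classical
  set cj : MvPolynomial (Fin n) ℂ → MvPolynomial (Fin n) ℂ := fun p => map (starRingEnd ℂ) p with hcj
  set q : MvPolynomial (Fin n ⊕ Fin n) ℂ :=
    (∑ i, rename Sum.inl (A i) * rename Sum.inr (cj (A i)))
      - ∑ c, rename Sum.inl (C c) * rename Sum.inr (cj (C c)) with hqdef
  have evq : ∀ z w : Fin n → ℂ, eval (Sum.elim z (fun j => (starRingEnd ℂ) (w j))) q
      = (∑ i, eval z (A i) * (starRingEnd ℂ) (eval w (A i)))
        - ∑ c, eval z (C c) * (starRingEnd ℂ) (eval w (C c)) := by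
    intro z w
    have hr : ∀ p : MvPolynomial (Fin n) ℂ,
        eval (Sum.elim z (fun j => (starRingEnd ℂ) (w j))) (rename Sum.inl p) = eval z p := by
      intro p; rw [eval_rename]; rfl
    have hr' : ∀ p : MvPolynomial (Fin n) ℂ,
        eval (Sum.elim z (fun j => (starRingEnd ℂ) (w j))) (rename Sum.inr (cj p))
          = (starRingEnd ℂ) (eval w p) := by
      intro p; rw [eval_rename, conj_eval]; rfl
    rw [hqdef]
    simp only [map_sub, map_sum, map_mul, hr, hr']
  have hq0 : q = 0 := by
    apply polarize
    intro z
    rw [evq z z]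
    have := hyp z
    have hcast : ((∑ i, Complex.normSq (eval z (A i)) : ℝ) : ℂ)
        = ((∑ c, Complex.normSq (eval z (C c)) : ℝ) : ℂ) := Complex.ofReal_inj.2 this
    push_cast at hcast
    simp only [Complex.mul_conj] at *
    rw [sub_eq_zero]
    exact_mod_cast hcast
  have hzw : ∀ z w : Fin n → ℂ,
      ∑ i, eval z (A i) * (starRingEnd ℂ) (eval w (A i))
        = ∑ c, eval z (C c) * (starRingEnd ℂ) (eval w (C c)) := by
    intro z w
    have := evq z w
    rw [hq0] at this
    simp only [map_zero] at this
    linear_combination -this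
  have hd : ∀ z : Fin n → ℂ,
      (∑ i, (starRingEnd ℂ) (eval z (A i)) • A i)
        = ∑ c, (starRingEnd ℂ) (eval z (C c)) • C c := by
    intro z
    apply MvPolynomial.funext
    intro w
    have := hzw w z
    simp only [map_sum, smul_eq_C_mul, map_mul, eval_C]
    calc ∑ i, (starRingEnd ℂ) (eval z (A i)) * eval w (A i)
        = ∑ i, eval w (A i) * (starRingEnd ℂ) (eval z (A i)) := by
          exact Finset.sum_congr rfl (fun i _ => mul_comm _ _)
      _ = ∑ c, eval w (C c) * (starRingEnd ℂ) (eval z (C c)) := this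
      _ = ∑ c, (starRingEnd ℂ) (eval z (C c)) * eval w (C c) := by
          exact Finset.sum_congr rfl (fun c _ => mul_comm _ _)
  intro c₀
  by_contra hc
  set p := Submodule.span ℂ (Set.range A) with hp
  have h1 : (Submodule.Quotient.mk (C c₀) : MvPolynomial (Fin n) ℂ ⧸ p) ≠ 0 := by
    simpa [Submodule.Quotient.mk_eq_zero] using hc
  rw [Ne, ← Module.forall_dual_apply_eq_zero_iff ℂ] at h1
  push_neg at h1
  obtain ⟨φ, hφ⟩ := h1
  set lam : MvPolynomial (Fin n) ℂ →ₗ[ℂ] ℂ := φ.comp p.mkQ with hlam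
  have hlamA : ∀ i, lam (A i) = 0 := by
    intro i
    have : A i ∈ p := Submodule.subset_span ⟨i, rfl⟩
    simp [hlam, Submodule.mkQ_apply, (Submodule.Quotient.mk_eq_zero p).2 this]
  have hz : ∀ z : Fin n → ℂ, ∑ c, (starRingEnd ℂ) (eval z (C c)) * lam (C c) = 0 := by
    intro z
    have := congrArg lam (hd z)
    simpa [map_sum, map_smul, hlamA, smul_eq_mul] using this.symm
  have hPc : (∑ c, (starRingEnd ℂ) (lam (C c)) • C c : MvPolynomial (Fin n) ℂ) = 0 := by
    apply MvPolynomial.funext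
    intro z
    have := congrArg (starRingEnd ℂ) (hz z)
    simp only [map_sum, map_mul, map_zero, Complex.conj_conj] at this
    simp only [map_sum, smul_eq_C_mul, map_mul, eval_C, map_zero]
    calc ∑ c, (starRingEnd ℂ) (lam (C c)) * eval z (C c)
        = ∑ c, eval z (C c) * (starRingEnd ℂ) (lam (C c)) :=
          Finset.sum_congr rfl (fun c _ => mul_comm _ _)
      _ = 0 := this
  have hfin : ∑ c, Complex.normSq (lam (C c)) = 0 := by
    have := congrArg lam hPc
    simp only [map_sum, map_smul, map_zero, smul_eq_mul] at this
    have h2 : ∑ c, ((Complex.normSq (lam (C c)) : ℝ) : ℂ) = 0 := by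
      rw [← this]
      exact Finset.sum_congr rfl fun c _ => by
        rw [← Complex.normSq_eq_conj_mul_self]
    exact_mod_cast h2
  have : Complex.normSq (lam (C c₀)) = 0 := by
    have hnn : ∀ c ∈ Finset.univ, (0:ℝ) ≤ Complex.normSq (lam (C c)) :=
      fun c _ => Complex.normSq_nonneg _
    exact (Finset.sum_eq_zero_iff_of_nonneg hnn).1 hfin c₀ (Finset.mem_univ _)
  exact hφ (by simpa [hlam, Complex.normSq_eq_zero] using this)


lemma homComp_mul {n m : ℕ} (a g : MvPolynomial (Fin n) ℂ) (hg : g.IsHomogeneous m) :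
    homogeneousComponent (m+1) (a * g) = homogeneousComponent 1 a * g := by
  classical
  set D := a.totalDegree + 2 with hD
  have ha : ∑ d ∈ Finset.range D, homogeneousComponent d a = a := by
    have hsub : Finset.range (a.totalDegree + 1) ⊆ Finset.range D := by
      apply Finset.range_subset_range.2; omega
    rw [← Finset.sum_subset hsub (fun x _ hx => by
      apply homogeneousComponent_eq_zero
      simp only [Finset.mem_range, not_lt] at hx
      omega)]
    exact sum_homogeneousComponent a
  conv_lhs => rw [← ha]
  rw [Finset.sum_mul, map_sum]
  rw [Finset.sum_eq_single 1]
  · have h1 : (homogeneousComponent 1 a * g).IsHomogeneous (1 + m) :=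
      (homogeneousComponent_isHomogeneous 1 a).mul hg
    rw [homogeneousComponent_of_mem ((mem_homogeneousSubmodule _ _).2 h1)]
    have : m + 1 = 1 + m := by omega
    simp [this]
  · intro d _ hd1
    have h1 : (homogeneousComponent d a * g).IsHomogeneous (d + m) :=
      (homogeneousComponent_isHomogeneous d a).mul hg
    rw [homogeneousComponent_of_mem ((mem_homogeneousSubmodule _ _).2 h1)]
    have : ¬ (m + 1 = d + m) := by omega
    simp [this]
  · intro h1notin
    exfalso; exact h1notin (by simp [hD])


/-- If `r(z) = ∑ |f_k(z)|² − ∑ |g_k(z)|²` (with all `f_k`, `g_k`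
homogeneous of degree `m`) is such that `r(z)‖z‖²` is a sum of squared moduli of
polynomials, then the degree-`(m+1)` component of `I⁻ = ⟨g₁,…,g_N⟩` is contained in the
degree-`(m+1)` component of `I⁺ = ⟨f₁,…,f_P⟩`; equivalently `z_j·g_k ∈ I⁺` for all `j, k`. -/
theorem squared_norm_ideal_containment (n m P N : ℕ)
    (f : Fin P → MvPolynomial (Fin n) ℂ) (g : Fin N → MvPolynomial (Fin n) ℂ)
    (hf : ∀ k, (f k).IsHomogeneous m) (hg : ∀ k, (g k).IsHomogeneous m)
    (ρ : ℕ) (h : Fin ρ → MvPolynomial (Fin n) ℂ)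
    (hsq : ∀ z : Fin n → ℂ,
      ((∑ k, Complex.normSq (eval z (f k))) - ∑ k, Complex.normSq (eval z (g k))) *
        (∑ j, Complex.normSq (z j)) = ∑ k, Complex.normSq (eval z (h k))) :
    (∀ p ∈ Ideal.span (Set.range g), p.IsHomogeneous (m + 1) →
      p ∈ Ideal.span (Set.range f)) ∧
    ∀ (k : Fin N) (j : Fin n), X j * g k ∈ Ideal.span (Set.range f) := by
  classical
  set A : Fin P × Fin n → MvPolynomial (Fin n) ℂ := fun ik => X ik.2 * f ik.1 with hA
  set Cfam : Fin ρ ⊕ (Fin N × Fin n) → MvPolynomial (Fin n) ℂ :=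
    Sum.elim h (fun kj => X kj.2 * g kj.1) with hC
  have key : ∀ (Q : ℕ) (u : Fin Q → MvPolynomial (Fin n) ℂ) (z : Fin n → ℂ),
      ∑ ik : Fin Q × Fin n, Complex.normSq (eval z (X ik.2 * u ik.1))
        = (∑ k, Complex.normSq (eval z (u k))) * (∑ j, Complex.normSq (z j)) := by
    intro Q u z
    rw [Finset.sum_mul_sum, Fintype.sum_prod_type]
    simp [eval_mul, eval_X, Complex.normSq_mul, mul_comm]
  have hyp : ∀ z : Fin n → ℂ,
      ∑ i, Complex.normSq (eval z (A i)) = ∑ c, Complex.normSq (eval z (Cfam c)) := by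
    intro z
    rw [hA, hC, Fintype.sum_sum_type]
    simp only [Sum.elim_inl, Sum.elim_inr]
    rw [key P f z, key N g z]
    linear_combination hsq z
  have hspan := hermitian_span A Cfam hyp
  have h2 : ∀ (k : Fin N) (j : Fin n), X j * g k ∈ Ideal.span (Set.range f) := by
    intro k j
    have hmem := hspan (Sum.inr (k, j))
    have hle : Submodule.span ℂ (Set.range A)
        ≤ (Ideal.span (Set.range f)).restrictScalars ℂ := by
      rw [Submodule.span_le]
      rintro x ⟨⟨k', j'⟩, rfl⟩
      exact Ideal.mul_mem_left _ _ (Ideal.subset_span ⟨k', rfl⟩)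
    exact hle hmem
  refine ⟨?_, h2⟩
  intro p hp hhom
  obtain ⟨a, ha⟩ := Ideal.mem_span_range_iff_exists_fun.1 hp
  have hp2 : p = ∑ k, homogeneousComponent 1 (a k) * g k := by
    calc p = homogeneousComponent (m+1) p := by
          rw [homogeneousComponent_of_mem ((mem_homogeneousSubmodule _ _).2 hhom)]
          simp
      _ = ∑ k, homogeneousComponent 1 (a k) * g k := by
          rw [← ha, map_sum]
          exact Finset.sum_congr rfl fun k _ => homComp_mul (a k) (g k) (hg k)
  rw [hp2]
  apply Ideal.sum_mem
  intro k _
  have hb : (homogeneousComponent 1 (a k)).IsHomogeneous 1 :=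
    homogeneousComponent_isHomogeneous 1 (a k)
  have hbX : homogeneousComponent 1 (a k)
      ∈ Ideal.span (Set.range (X : Fin n → MvPolynomial (Fin n) ℂ)) := by
    rw [← Set.image_univ, mem_ideal_span_X_image]
    intro d hd
    have hw := hb (mem_support_iff.1 hd)
    by_contra hcon
    push_neg at hcon
    have hd0 : d = 0 := Finsupp.ext fun i => hcon i (Set.mem_univ i)
    rw [hd0] at hw
    simp at hw
  obtain ⟨c, hc⟩ := Ideal.mem_span_range_iff_exists_fun.1 hbX
  rw [← hc, Finset.sum_mul]
  apply Ideal.sum_mem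
  intro j _
  rw [mul_assoc]
  exact Ideal.mul_mem_left _ _ (h2 k j)

end
end

section
/- Let n ≤ 3 and m ≥ 1. Let f₁,…,f_P and g be homogeneous polynomials of degree m in ℂ[z₁,…,zₙ] such that {f₁,…,f_P, g} is linearly independent over ℂ. Let I⁺ = ⟨f₁,…,f_P⟩ and I⁻ = ⟨g⟩. If the degree-(m+1) homogeneous component of I⁻ is contained in the degree-(m+1) homogeneous component of I⁺ (equivalently, z_j·g ∈ I⁺ for every j = 1,…,n), then P ≥ n. -/
/-!
Write `z_j g = ∑_k l_{jk} f_k` with linear `l_{jk}`. If `P = 1`, then `f₁` divides both `z₁ g` and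
`z₂ g`, hence `g`, and comparing degrees gives `g ∈ ℂ f₁`.

If `P = 2` and `n = 3`, divide `f₁, f₂` by their common factor, which then divides `g` as well;
so we may assume that `f₁, f₂` are coprime. In degree one, take a linear functional that vanishes
on `f₁, f₂` but not on `g`: on linear forms it is evaluation at some point `v`, and
`v_j g(v) = 0` for every `j` forces `v = 0`, which is absurd. In degree `m ≥ 2`, coprimality makes
every minor `z_k l_{j1} - z_j l_{k1}` a constant multiple of `f₂`, because it has degree
`2 ≤ m`. The identity `∑_cyc z_i (z_k l_{j1} - z_j l_{k1}) = 0` kills these constants, so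
`l_{j1} = μ z_j`. Then `f₂` divides every `z_j (g - μ f₁)`, and so `g - μ f₁ ∈ ℂ f₂`.
-/

open MvPolynomial

namespace MvPolynomial

section Expansion

variable {σ R : Type*} [CommSemiring R]

/-- `p(z) ↦ p(t • z)`: the coefficient of `tᵏ` is the degree-`k` component of `p`. -/
noncomputable def homogeneousExpansion : MvPolynomial σ R →ₐ[R] Polynomial (MvPolynomial σ R) :=
  aeval fun i => Polynomial.C (X i) * Polynomial.X

theorem homogeneousExpansion_monomial (d : σ →₀ ℕ) (r : R) :
    homogeneousExpansion (monomial d r) = Polynomial.monomial d.degree (monomial d r) := by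
  rw [homogeneousExpansion, aeval_monomial, Finsupp.prod]
  simp only [mul_pow, Finset.prod_mul_distrib, Finset.prod_pow_eq_pow_sum, ← map_pow, ← map_prod]
  rw [← Polynomial.C_mul_X_pow_eq_monomial, monomial_eq, Finsupp.prod, Finsupp.degree_apply,
    Polynomial.algebraMap_apply, algebraMap_eq, ← mul_assoc, map_mul]

theorem coeff_homogeneousExpansion (p : MvPolynomial σ R) (k : ℕ) :
    (homogeneousExpansion p).coeff k = homogeneousComponent k p := by
  induction p using MvPolynomial.induction_on' with
  | monomial d r =>
    rw [homogeneousExpansion_monomial, Polynomial.coeff_monomial,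
      homogeneousComponent_of_mem (isHomogeneous_monomial r rfl)]
    simp only [eq_comm]
  | add p q hp hq => simp only [map_add, Polynomial.coeff_add, hp, hq]

theorem eval_one_homogeneousExpansion (p : MvPolynomial σ R) :
    (homogeneousExpansion p).eval 1 = p := by
  induction p using MvPolynomial.induction_on with
  | C r => simp [homogeneousExpansion]
  | add p q hp hq => simp [hp, hq]
  | mul_X p i hp =>
    rw [map_mul, Polynomial.eval_mul, hp]
    simp [homogeneousExpansion]

theorem IsHomogeneous.homogeneousExpansion_eq {p : MvPolynomial σ R} {n : ℕ}
    (hp : p.IsHomogeneous n) : homogeneousExpansion p = Polynomial.monomial n p := by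
  ext1 k
  rw [coeff_homogeneousExpansion, Polynomial.coeff_monomial, homogeneousComponent_of_mem hp]
  simp only [eq_comm]

theorem homogeneousComponent_add_mul {p q : MvPolynomial σ R} {n : ℕ} (hq : q.IsHomogeneous n)
    (k : ℕ) : homogeneousComponent (k + n) (p * q) = homogeneousComponent k p * q := by
  rw [← coeff_homogeneousExpansion, map_mul, hq.homogeneousExpansion_eq,
    Polynomial.coeff_mul_monomial, coeff_homogeneousExpansion]

theorem isHomogeneous_natDegree_homogeneousExpansion {p : MvPolynomial σ R}
    (h : (homogeneousExpansion p).natTrailingDegree = (homogeneousExpansion p).natDegree) :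
    p.IsHomogeneous (homogeneousExpansion p).natDegree := by
  intro d hd
  have hcoeff : (homogeneousExpansion p).coeff d.degree ≠ 0 := by
    rw [coeff_homogeneousExpansion]
    refine ne_of_apply_ne (coeff d) ?_
    rwa [coeff_homogeneousComponent, if_pos rfl, coeff_zero]
  have := Polynomial.le_natDegree_of_ne_zero hcoeff
  have := Polynomial.natTrailingDegree_le_of_ne_zero hcoeff
  have hdeg : d.degree = (homogeneousExpansion p).natDegree := by omega
  rwa [Finsupp.degree_eq_weight_one, ← Pi.one_def] at hdeg

theorem exists_isHomogeneous_coeffs_of_mem_span {ι : Type*} [Fintype ι]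
    {f : ι → MvPolynomial σ R} {k m : ℕ} (hf : ∀ i, (f i).IsHomogeneous m)
    {p : MvPolynomial σ R} (hp : p.IsHomogeneous (k + m)) (hmem : p ∈ Ideal.span (Set.range f)) :
    ∃ l : ι → MvPolynomial σ R, (∀ i, (l i).IsHomogeneous k) ∧ p = ∑ i, l i * f i := by
  obtain ⟨h, rfl⟩ := Ideal.mem_span_range_iff_exists_fun.mp hmem
  refine ⟨fun i => homogeneousComponent k (h i),
    fun i => homogeneousComponent_isHomogeneous k _, ?_⟩
  rw [← homogeneousComponent_eq_self hp, map_sum]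
  exact Finset.sum_congr rfl fun i _ => homogeneousComponent_add_mul (hf i) k

end Expansion

section Domain

variable {σ R : Type*} [CommRing R] [IsDomain R]

theorem IsHomogeneous.exists_of_mul {p q : MvPolynomial σ R} {n : ℕ}
    (h : (p * q).IsHomogeneous n) (hp : p ≠ 0) (hq : q ≠ 0) :
    ∃ i j, i + j = n ∧ p.IsHomogeneous i ∧ q.IsHomogeneous j := by
  classical
  have hE : ∀ {r : MvPolynomial σ R}, r ≠ 0 → homogeneousExpansion r ≠ 0 := fun {r} hr h0 =>
    hr (by rw [← eval_one_homogeneousExpansion r, h0, Polynomial.eval_zero])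
  have hmul : homogeneousExpansion p * homogeneousExpansion q = Polynomial.monomial n (p * q) := by
    rw [← map_mul, h.homogeneousExpansion_eq]
  have hdeg := Polynomial.natDegree_mul (hE hp) (hE hq)
  have htrail := Polynomial.natTrailingDegree_mul (hE hp) (hE hq)
  rw [hmul, Polynomial.natDegree_monomial, if_neg (mul_ne_zero hp hq)] at hdeg
  rw [hmul, Polynomial.natTrailingDegree_monomial (mul_ne_zero hp hq)] at htrail
  have := (homogeneousExpansion p).natTrailingDegree_le_natDegree
  have := (homogeneousExpansion q).natTrailingDegree_le_natDegree
  exact ⟨_, _, hdeg.symm, isHomogeneous_natDegree_homogeneousExpansion (by omega),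
    isHomogeneous_natDegree_homogeneousExpansion (by omega)⟩

theorem IsHomogeneous.of_mul_left {p q : MvPolynomial σ R} {m n : ℕ}
    (h : (p * q).IsHomogeneous (m + n)) (hp : p.IsHomogeneous m) (hp0 : p ≠ 0) :
    q.IsHomogeneous n := by
  by_cases hq0 : q = 0
  · simp [hq0, isHomogeneous_zero]
  obtain ⟨i, j, hij, hpi, hqj⟩ := h.exists_of_mul hp0 hq0
  obtain rfl := hpi.inj_right hp hp0
  rwa [show n = j by omega]

theorem exists_eq_C_mul_of_dvd {p q : MvPolynomial σ R} {d e : ℕ} (hp : p.IsHomogeneous e)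
    (hq : q.IsHomogeneous d) (hde : d ≤ e) (h : p ∣ q) : ∃ c, q = C c * p := by
  obtain ⟨u, rfl⟩ := h
  by_cases hp0 : p = 0
  · exact ⟨0, by simp [hp0]⟩
  by_cases hu0 : u = 0
  · exact ⟨0, by simp [hu0]⟩
  obtain ⟨i, j, hij, hpi, huj⟩ := hq.exists_of_mul hp0 hu0
  obtain rfl := hpi.inj_right hp hp0
  obtain rfl : j = 0 := by omega
  have hu : u = C (coeff 0 u) :=
    totalDegree_eq_zero_iff_eq_C.mp (Nat.le_zero.mp huj.totalDegree_le)
  exact ⟨coeff 0 u, by rw [mul_comm, ← hu]⟩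

theorem dvd_of_dvd_X_mul_of_dvd_X_mul {i j : σ} (hij : i ≠ j) {p q : MvPolynomial σ R}
    (hi : p ∣ X i * q) (hj : p ∣ X j * q) : p ∣ q := by
  obtain ⟨u, hu⟩ := hi
  obtain ⟨v, hv⟩ := hj
  by_cases hp : p = 0
  · rw [hp, zero_mul, mul_eq_zero] at hu
    rw [hu.resolve_left (X_ne_zero i)]
    exact dvd_zero p
  have huv : X j * u = X i * v := mul_left_cancel₀ hp (by linear_combination X i * hv - X j * hu)
  obtain ⟨w, rfl⟩ : X i ∣ u := (X_prime.dvd_or_dvd ⟨v, huv⟩).resolve_left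
    (by rwa [X_dvd_X])
  exact ⟨w, mul_left_cancel₀ (X_ne_zero i) (by linear_combination hu)⟩

theorem exists_eq_C_mul_of_dvd_X_mul {i j : σ} (hij : i ≠ j) {p q : MvPolynomial σ R} {m : ℕ}
    (hp : p.IsHomogeneous m) (hq : q.IsHomogeneous m) (hi : p ∣ X i * q) (hj : p ∣ X j * q) :
    ∃ c, q = C c * p :=
  exists_eq_C_mul_of_dvd hp hq le_rfl (dvd_of_dvd_X_mul_of_dvd_X_mul hij hi hj)

end Domain

variable {σ K : Type*} [Field K]

theorem mem_span_of_forall_X_mul_mem_ideal_span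
    {s : Set (MvPolynomial σ K)} {g : MvPolynomial σ K} (hs : ∀ f ∈ s, f.IsHomogeneous 1)
    (hg : g.IsHomogeneous 1) (h : ∀ j, X j * g ∈ Ideal.span s) : g ∈ Submodule.span K s := by
  by_contra hgs
  obtain ⟨φ, hφg, hφs⟩ := Submodule.exists_dual_map_eq_bot_of_notMem hgs inferInstance
  set v : σ → K := fun i => φ (X i)
  have heval : ∀ p : MvPolynomial σ K, p.IsHomogeneous 1 → eval v p = φ p := by
    intro p hp
    rw [← coe_aeval_eq_eval]
    have hspan : p ∈ Submodule.span K (Set.range X) := by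
      rwa [← homogeneousSubmodule_one_eq_span_X]
    refine LinearMap.eqOn_span (f := (aeval v).toLinearMap) ?_ hspan
    rintro _ ⟨i, rfl⟩
    simp [v]
  have hker : Ideal.span s ≤ RingHom.ker (eval v) := Ideal.span_le.mpr fun f hf => by
    rw [SetLike.mem_coe, RingHom.mem_ker, heval f (hs f hf)]
    exact LinearMap.le_ker_iff_map.mpr hφs (Submodule.subset_span hf)
  have hv : v = 0 := by
    ext j
    have := hker (h j)
    rw [RingHom.mem_ker, eval_mul, eval_X, heval g hg] at this
    exact (mul_eq_zero.mp this).resolve_right hφg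
  apply hφg
  rw [← heval g hg, hv, eval_zero, constantCoeff_eq]
  exact hg.coeff_eq_zero (by simp)

section ThreeVariables

variable {f₀ f₁ g : MvPolynomial (Fin 3) K} {m : ℕ}
  {a b : Fin 3 → MvPolynomial (Fin 3) K}

theorem mem_span_pair_of_isRelPrime_of_two_le (hm : 2 ≤ m) (hf₀ : f₀.IsHomogeneous m)
    (hf₁ : f₁.IsHomogeneous m) (hg : g.IsHomogeneous m) (hcop : IsRelPrime f₀ f₁) (hf₁0 : f₁ ≠ 0)
    (ha : ∀ j, (a j).IsHomogeneous 1) (hrel : ∀ j, X j * g = a j * f₀ + b j * f₁) :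
    g ∈ Submodule.span K {f₀, f₁} := by
  have hA : ∀ j k, ∃ c : K, X k * a j - X j * a k = C c * f₁ := fun j k =>
    exists_eq_C_mul_of_dvd hf₁
      (((isHomogeneous_X K k).mul (ha j)).sub ((isHomogeneous_X K j).mul (ha k))) hm
      (hcop.symm.dvd_of_dvd_mul_right
        ⟨X j * b k - X k * b j, by linear_combination X j * hrel k - X k * hrel j⟩)
  obtain ⟨c₀, hc₀⟩ := hA 1 2
  obtain ⟨c₁, hc₁⟩ := hA 2 0
  obtain ⟨c₂, hc₂⟩ := hA 0 1
  have hform : (C c₀ * X 0 + C c₁ * X 1 + C c₂ * X 2) * f₁ = 0 := by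
    linear_combination -(X 0 * hc₀ + X 1 * hc₁ + X 2 * hc₂)
  have hc₂0 : c₂ = 0 := by
    simpa [coeff_X, Finsupp.single_eq_single_iff] using
      congrArg (coeff (Finsupp.single 2 1)) ((mul_eq_zero.mp hform).resolve_right hf₁0)
  have ha₀₁ : X 1 * a 0 = X 0 * a 1 := by simpa [hc₂0, sub_eq_zero] using hc₂
  obtain ⟨μ, hμ⟩ := exists_eq_C_mul_of_dvd_X_mul (i := 0) (j := 1) (by decide)
    (isHomogeneous_X K 0) (ha 0) (dvd_mul_right _ _) ⟨a 1, ha₀₁⟩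
  have ha₁ : a 1 = C μ * X 1 :=
    mul_left_cancel₀ (X_ne_zero 0) (by linear_combination -ha₀₁ + X 1 * hμ)
  obtain ⟨ν, hν⟩ := exists_eq_C_mul_of_dvd_X_mul (i := 0) (j := 1) (by decide) hf₁
    (hg.sub (hf₀.C_mul μ)) ⟨b 0, by linear_combination hrel 0 + f₀ * hμ⟩
    ⟨b 1, by linear_combination hrel 1 + f₀ * ha₁⟩
  exact Submodule.mem_span_pair.mpr ⟨μ, ν, by
    rw [smul_eq_C_mul, smul_eq_C_mul]; linear_combination -hν⟩

theorem mem_span_pair_of_isRelPrime (hf₀ : f₀.IsHomogeneous m) (hf₁ : f₁.IsHomogeneous m)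
    (hg : g.IsHomogeneous m) (hcop : IsRelPrime f₀ f₁) (hf₁0 : f₁ ≠ 0)
    (ha : ∀ j, (a j).IsHomogeneous 1) (hrel : ∀ j, X j * g = a j * f₀ + b j * f₁) :
    g ∈ Submodule.span K {f₀, f₁} := by
  obtain _ | _ | m := m
  · have hunit : IsUnit f₁ := by
      rw [totalDegree_eq_zero_iff_eq_C.mp (Nat.le_zero.mp hf₁.totalDegree_le)] at hf₁0 ⊢
      exact (isUnit_iff_ne_zero.mpr fun h => hf₁0 (by rw [h, map_zero])).map C
    obtain ⟨c, hc⟩ := exists_eq_C_mul_of_dvd hf₁ hg le_rfl hunit.dvd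
    exact Submodule.mem_span_pair.mpr ⟨0, c, by rw [hc, zero_smul, zero_add, smul_eq_C_mul]⟩
  · exact mem_span_of_forall_X_mul_mem_ideal_span (by simp [hf₀, hf₁]) hg
      fun j => Ideal.mem_span_pair.mpr ⟨a j, b j, (hrel j).symm⟩
  · exact mem_span_pair_of_isRelPrime_of_two_le (by omega) hf₀ hf₁ hg hcop hf₁0 ha hrel

theorem mem_span_pair_of_forall_X_mul_eq (hf₀ : f₀.IsHomogeneous m) (hf₁ : f₁.IsHomogeneous m)
    (hg : g.IsHomogeneous m) (ha : ∀ j, (a j).IsHomogeneous 1)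
    (hrel : ∀ j, X j * g = a j * f₀ + b j * f₁) : g ∈ Submodule.span K {f₀, f₁} := by
  by_cases hf₁0 : f₁ = 0
  · obtain ⟨c, hc⟩ := exists_eq_C_mul_of_dvd_X_mul (i := 0) (j := 1) (by decide) hf₀ hg
      ⟨a 0, by rw [hrel, hf₁0]; ring⟩ ⟨a 1, by rw [hrel, hf₁0]; ring⟩
    exact Submodule.mem_span_pair.mpr ⟨c, 0, by rw [hc, zero_smul, add_zero, smul_eq_C_mul]⟩
  obtain ⟨f₀', f₁', d, hcop, rfl, rfl⟩ :=
    UniqueFactorizationMonoid.exists_reduced_factors' f₀ f₁ hf₁0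
  have hd0 : d ≠ 0 := left_ne_zero_of_mul hf₁0
  obtain ⟨g', rfl⟩ : d ∣ g := dvd_of_dvd_X_mul_of_dvd_X_mul (i := 0) (j := 1) (by decide)
    ⟨a 0 * f₀' + b 0 * f₁', by rw [hrel]; ring⟩ ⟨a 1 * f₀' + b 1 * f₁', by rw [hrel]; ring⟩
  obtain ⟨e, m', rfl, hd, hf₁'⟩ := hf₁.exists_of_mul hd0 (right_ne_zero_of_mul hf₁0)
  obtain ⟨α, β, hαβ⟩ := Submodule.mem_span_pair.mp <|
    mem_span_pair_of_isRelPrime (hf₀.of_mul_left hd hd0) hf₁' (hg.of_mul_left hd hd0) hcop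
      (right_ne_zero_of_mul hf₁0) ha (b := b)
      fun j => mul_left_cancel₀ hd0 (by linear_combination hrel j)
  exact Submodule.mem_span_pair.mpr ⟨α, β, by rw [← hαβ, mul_add, mul_smul_comm, mul_smul_comm]⟩

end ThreeVariables

end MvPolynomial

theorem alg_sig_P1_n_le_three_general (n m P : ℕ) (hn : n ≤ 3)
    (f : Fin P → MvPolynomial (Fin n) ℂ) (g : MvPolynomial (Fin n) ℂ)
    (hf : ∀ k, (f k).IsHomogeneous m) (hg : g.IsHomogeneous m)
    (hlin : LinearIndependent ℂ (Fin.snoc f g : Fin (P + 1) → MvPolynomial (Fin n) ℂ))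
    (hcontain : ∀ j : Fin n, X j * g ∈ Ideal.span (Set.range f)) : n ≤ P := by
  have hg_span := (linearIndependent_finSnoc.mp hlin).2
  by_contra! hP
  choose l hl hrel using fun j =>
    exists_isHomogeneous_coeffs_of_mem_span hf ((isHomogeneous_X ℂ j).mul hg) (hcontain j)
  have hP3 : P < 3 := by omega
  interval_cases P
  · have h0 := hrel ⟨0, hP⟩
    rw [Fin.sum_univ_zero, mul_eq_zero, or_iff_right (X_ne_zero _)] at h0
    exact hg_span (h0 ▸ Submodule.zero_mem _)
  · have hdvd : ∀ j, f 0 ∣ X j * g := fun j => ⟨l j 0, by rw [hrel, Fin.sum_univ_one, mul_comm]⟩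
    obtain ⟨c, hc⟩ := exists_eq_C_mul_of_dvd_X_mul (i := ⟨0, by omega⟩) (j := ⟨1, hP⟩)
      (by simp [Fin.ext_iff]) (hf 0) hg (hdvd _) (hdvd _)
    rw [hc, ← smul_eq_C_mul] at hg_span
    exact hg_span (Submodule.smul_mem _ c (Submodule.subset_span ⟨0, rfl⟩))
  · obtain rfl : n = 3 := by omega
    have hrange : Set.range f = {f 0, f 1} := by
      ext; simp [Fin.exists_fin_two, eq_comm]
    exact hg_span <| hrange ▸ mem_span_pair_of_forall_X_mul_eq (hf 0) (hf 1) hg (fun j => hl j 0)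
      fun j => by simpa [Fin.sum_univ_two] using hrel j

/-- algebraic form, `n ≤ 3`. If `f₁,…,f_P, g` are homogeneous of degree
`m` in `ℂ[z₁,…,zₙ]`, linearly independent, and `z_j·g ∈ ⟨f₁,…,f_P⟩` for all `j`
(i.e. `⟨g⟩_{m+1} ⊆ ⟨f₁,…,f_P⟩_{m+1}`), then `n ≤ 3` implies `P ≥ n`. -/
theorem alg_sig_P1_n_le_three (n m P : ℕ) (hn : n ≤ 3) (hm : 1 ≤ m)
    (f : Fin P → MvPolynomial (Fin n) ℂ) (g : MvPolynomial (Fin n) ℂ)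
    (hf : ∀ k, (f k).IsHomogeneous m) (hg : g.IsHomogeneous m)
    (hlin : LinearIndependent ℂ (Fin.snoc f g : Fin (P + 1) → MvPolynomial (Fin n) ℂ))
    (hcontain : ∀ j : Fin n, X j * g ∈ Ideal.span (Set.range f)) : n ≤ P :=
  alg_sig_P1_n_le_three_general n m P hn f g hf hg hlin hcontain
end

section
/- Let n ≥ 4. Then there exist an integer m ≥ 1, an integer P < n, and homogeneous polynomials f₁,…,f_P and g of degree m in ℂ[z₁,…,zₙ] such that {f₁,…,f_P, g} is linearly independent over ℂ and z_j·g ∈ ⟨f₁,…,f_P⟩ for every j = 1,…,n (i.e., the degree-(m+1) component of ⟨g⟩ is contained in the degree-(m+1) component of ⟨f₁,…,f_P⟩). -/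
open MvPolynomial

private lemma pair_eq_iff {n : ℕ} (a b c d : Fin n) :
    Finsupp.single a 1 + Finsupp.single b 1 = Finsupp.single c 1 + Finsupp.single d 1
      ↔ (a = c ∧ b = d) ∨ (a = d ∧ b = c) := by
  rw [Finsupp.single_add_single_eq_single_add_single (one_ne_zero) (one_ne_zero)]
  simp

private def av (n : ℕ) (i : Fin (n-1+1)) : ℕ := if i.val = 1 then 1 else 0

private def bv (n : ℕ) (i : Fin (n-1+1)) : ℕ :=
  if i.val = 0 then 0 else if i.val = 1 then 1 else if i.val = 2 then 2
  else if i.val = n-1 then 1 else i.val + 1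

private lemma av_lt (n : ℕ) (hn : 4 ≤ n) (i : Fin (n-1+1)) : av n i < n := by
  unfold av; split_ifs <;> omega

private lemma bv_lt (n : ℕ) (hn : 4 ≤ n) (i : Fin (n-1+1)) : bv n i < n := by
  unfold bv; split_ifs <;> omega

private noncomputable def mu (n : ℕ) (hn : 4 ≤ n) (i : Fin (n-1+1)) : Fin n →₀ ℕ :=
  Finsupp.single ⟨av n i, av_lt n hn i⟩ 1 + Finsupp.single ⟨bv n i, bv_lt n hn i⟩ 1

private lemma mu_inj (n : ℕ) (hn : 4 ≤ n) (i i' : Fin (n-1+1)) :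
    mu n hn i' = mu n hn i ↔ i' = i := by
  constructor
  · intro h
    rw [mu, mu, pair_eq_iff] at h
    simp only [Fin.mk.injEq] at h
    apply Fin.ext
    have hb : n - 1 + 1 = n := by omega
    unfold av bv at h
    split_ifs at h <;>
      ((try simp only [false_and, and_false, true_and, and_true, or_self, false_or,
          or_false, not_or, not_false_iff] at h) <;> omega)
  · rintro rfl; rfl

private lemma mu_eq (n : ℕ) (hn : 4 ≤ n) (i : Fin (n-1+1)) {a b : ℕ}
    (ha : a < n) (hb : b < n) (h1 : av n i = a) (h2 : bv n i = b) :
    mu n hn i = Finsupp.single ⟨a, ha⟩ 1 + Finsupp.single ⟨b, hb⟩ 1 := by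
  subst h1; subst h2; rfl

private lemma extra_ne (n : ℕ) (hn : 4 ≤ n) (i : Fin (n-1+1)) :
    Finsupp.single (⟨1, by omega⟩ : Fin n) 1 + Finsupp.single (⟨3, by omega⟩ : Fin n) 1
      ≠ mu n hn i := by
  rw [Ne, mu, pair_eq_iff]
  simp only [Fin.mk.injEq]
  unfold av bv
  split_ifs <;>
    ((try simp only [false_and, and_false, true_and, and_true, or_self, false_or,
        or_false, not_or, not_false_iff]) <;> omega)

private lemma XmulX {n : ℕ} (a b : Fin n) :
    (X a * X b : MvPolynomial (Fin n) ℂ)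
      = monomial (Finsupp.single a 1 + Finsupp.single b 1) 1 := by
  rw [X, X, monomial_mul, one_mul]

private noncomputable def ff (n : ℕ) (hn : 4 ≤ n) : Fin (n-1) → MvPolynomial (Fin n) ℂ :=
  fun k =>
  if k.val = 0 then X ⟨0, by omega⟩ * X ⟨0, by omega⟩
  else if k.val = 1 then X ⟨1, by omega⟩ * X ⟨1, by omega⟩
  else if k.val = 2 then X ⟨0, by omega⟩ * X ⟨2, by omega⟩ + X ⟨1, by omega⟩ * X ⟨3, by omega⟩
  else X ⟨0, by omega⟩ * X ⟨k.val + 1, by omega⟩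

private noncomputable def gg (n : ℕ) (hn : 4 ≤ n) : MvPolynomial (Fin n) ℂ :=
  X ⟨0, by omega⟩ * X ⟨1, by omega⟩

private noncomputable def ee (n : ℕ) (hn : 4 ≤ n) (i : Fin (n-1+1)) :
    MvPolynomial (Fin n) ℂ :=
  if i.val = 2 then
    monomial (Finsupp.single (⟨1, by omega⟩ : Fin n) 1
      + Finsupp.single (⟨3, by omega⟩ : Fin n) 1) 1
  else 0

private lemma vv_eq (n : ℕ) (hn : 4 ≤ n) (i : Fin (n-1+1)) :
    (Fin.snoc (ff n hn) (gg n hn) : Fin (n-1+1) → MvPolynomial (Fin n) ℂ) i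
      = monomial (mu n hn i) 1 + ee n hn i := by
  have hlt := i.isLt
  rcases lt_or_ge i.val (n-1) with h | h
  · have hi : i = Fin.castSucc ⟨i.val, h⟩ := Fin.ext rfl
    rw [hi, Fin.snoc_castSucc, ← hi]
    unfold ff ee
    simp only [Fin.val_mk]
    by_cases h0 : i.val = 0
    · rw [if_pos h0, if_neg (by omega),
        mu_eq n hn i (a := 0) (b := 0) (by omega) (by omega)
          (by unfold av; rw [if_neg (by omega)]) (by unfold bv; rw [if_pos h0]),
        XmulX, add_zero]
    by_cases h1 : i.val = 1
    · rw [if_neg h0, if_pos h1, if_neg (by omega),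
        mu_eq n hn i (a := 1) (b := 1) (by omega) (by omega)
          (by unfold av; rw [if_pos h1]) (by unfold bv; rw [if_neg h0, if_pos h1]),
        XmulX, add_zero]
    by_cases h2 : i.val = 2
    · rw [if_neg h0, if_neg h1, if_pos h2, if_pos h2,
        mu_eq n hn i (a := 0) (b := 2) (by omega) (by omega)
          (by unfold av; rw [if_neg (by omega)])
          (by unfold bv; rw [if_neg h0, if_neg h1, if_pos h2]),
        XmulX, XmulX]
    · rw [if_neg h0, if_neg h1, if_neg h2, if_neg h2,
        mu_eq n hn i (a := 0) (b := i.val + 1) (by omega) (by omega)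
          (by unfold av; rw [if_neg (by omega)])
          (by unfold bv;
              rw [if_neg h0, if_neg h1, if_neg h2, if_neg (by omega)]),
        XmulX, add_zero]
  · have hi : i = Fin.last (n-1) := Fin.ext (by simp only [Fin.val_last]; omega)
    have hv : i.val = n - 1 := by rw [hi]; rfl
    rw [hi, Fin.snoc_last, ← hi]
    unfold gg ee
    rw [if_neg (by omega),
      mu_eq n hn i (a := 0) (b := 1) (by omega) (by omega)
        (by unfold av; rw [if_neg (by omega)])
        (by unfold bv;
            rw [if_neg (by omega), if_neg (by omega), if_neg (by omega), if_pos hv]),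
      XmulX, add_zero]

private lemma coeff_vv (n : ℕ) (hn : 4 ≤ n) (i i' : Fin (n-1+1)) :
    coeff (mu n hn i) ((Fin.snoc (ff n hn) (gg n hn) :
        Fin (n-1+1) → MvPolynomial (Fin n) ℂ) i')
      = if i' = i then 1 else 0 := by
  have he : coeff (mu n hn i) (ee n hn i') = 0 := by
    unfold ee; split_ifs
    · rw [coeff_monomial, if_neg (extra_ne n hn i)]
    · exact coeff_zero _
  rw [vv_eq, coeff_add, coeff_monomial, he, add_zero]
  simp only [mu_inj n hn i i']

private lemma li (n : ℕ) (hn : 4 ≤ n) :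
    LinearIndependent ℂ
      (Fin.snoc (ff n hn) (gg n hn) : Fin (n-1+1) → MvPolynomial (Fin n) ℂ) := by
  rw [Fintype.linearIndependent_iff]
  intro c hc i
  have h2 := congrArg (lcoeff ℂ (mu n hn i)) hc
  rw [map_sum, map_zero] at h2
  simp only [lcoeff_apply, coeff_smul, smul_eq_mul, coeff_vv n hn i] at h2
  simp only [mul_ite, mul_one, mul_zero] at h2
  rwa [Finset.sum_ite_eq' Finset.univ i c, if_pos (Finset.mem_univ i)] at h2

set_option maxHeartbeats 1000000 in
/-- algebraic form, `n ≥ 4`. For `n ≥ 4` there exist `m ≥ 1`, `P < n`,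
and homogeneous degree-`m` polynomials `f₁,…,f_P, g`, linearly independent, with
`z_j·g ∈ ⟨f₁,…,f_P⟩` for every `j`. -/
theorem alg_sig_P1_exists_P_lt_n (n : ℕ) (hn : 4 ≤ n) :
    ∃ (m P : ℕ), 1 ≤ m ∧ P < n ∧
      ∃ (f : Fin P → MvPolynomial (Fin n) ℂ) (g : MvPolynomial (Fin n) ℂ),
        (∀ k, (f k).IsHomogeneous m) ∧ g.IsHomogeneous m ∧
        LinearIndependent ℂ (Fin.snoc f g : Fin (P + 1) → MvPolynomial (Fin n) ℂ) ∧
        ∀ j : Fin n, X j * g ∈ Ideal.span (Set.range f) := by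
  refine ⟨2, n - 1, by omega, by omega, ff n hn, gg n hn, ?_, ?_, li n hn, ?_⟩
  · intro k
    have h1 : ∀ a : Fin n, (X a : MvPolynomial (Fin n) ℂ).IsHomogeneous 1 :=
      fun a => isHomogeneous_X ℂ a
    unfold ff
    split_ifs <;>
      first
        | exact (h1 _).mul (h1 _)
        | exact ((h1 _).mul (h1 _)).add ((h1 _).mul (h1 _))
  · exact (isHomogeneous_X ℂ _).mul (isHomogeneous_X ℂ _)
  · intro j
    have mem : ∀ k : Fin (n-1), ff n hn k ∈ Ideal.span (Set.range (ff n hn)) :=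
      fun k => Ideal.subset_span ⟨k, rfl⟩
    by_cases h0 : j.val = 0
    · have hj0 : j = ⟨0, by omega⟩ := Fin.ext h0
      have he : X j * gg n hn = X ⟨1, by omega⟩ * ff n hn ⟨0, by omega⟩ := by
        rw [hj0]; unfold ff gg; simp only [Fin.val_mk]; norm_num; try ring
      rw [he]; exact Ideal.mul_mem_left _ _ (mem _)
    by_cases h1 : j.val = 1
    · have hj0 : j = ⟨1, by omega⟩ := Fin.ext h1
      have he : X j * gg n hn = X ⟨0, by omega⟩ * ff n hn ⟨1, by omega⟩ := by
        rw [hj0]; unfold ff gg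
        simp only [Fin.val_mk]; norm_num; try ring
      rw [he]; exact Ideal.mul_mem_left _ _ (mem _)
    by_cases h2 : j.val = 2
    · have hj0 : j = ⟨2, by omega⟩ := Fin.ext h2
      have he : X j * gg n hn
          = X ⟨1, by omega⟩ * ff n hn ⟨2, by omega⟩
            - X ⟨3, by omega⟩ * ff n hn ⟨1, by omega⟩ := by
        rw [hj0]; unfold ff gg
        simp only [Fin.val_mk]; norm_num; try ring
      rw [he]
      exact sub_mem (Ideal.mul_mem_left _ _ (mem _)) (Ideal.mul_mem_left _ _ (mem _))
    by_cases h3 : j.val = 3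
    · have hj0 : j = ⟨3, by omega⟩ := Fin.ext h3
      have he : X j * gg n hn
          = X ⟨0, by omega⟩ * ff n hn ⟨2, by omega⟩
            - X ⟨2, by omega⟩ * ff n hn ⟨0, by omega⟩ := by
        rw [hj0]; unfold ff gg
        simp only [Fin.val_mk]; norm_num; try ring
      rw [he]
      exact sub_mem (Ideal.mul_mem_left _ _ (mem _)) (Ideal.mul_mem_left _ _ (mem _))
    · have hj4 : 4 ≤ j.val := by omega
      have hk : ff n hn ⟨j.val - 1, by omega⟩ = X ⟨0, by omega⟩ * X j := by
        unfold ff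
        simp only [Fin.val_mk]
        rw [if_neg (by omega), if_neg (by omega), if_neg (by omega)]
        have : (⟨j.val - 1 + 1, by omega⟩ : Fin n) = j := by
          apply Fin.ext; simp only [Fin.val_mk]; omega
        rw [this]
      have he : X j * gg n hn = X ⟨1, by omega⟩ * ff n hn ⟨j.val - 1, by omega⟩ := by
        rw [hk]; unfold gg; ring
      rw [he]; exact Ideal.mul_mem_left _ _ (mem _)
end

section
/- Let n ≥ 3 and let f₁, f₂, g be homogeneous polynomials of degree m in ℂ[z₁,…,zₙ]. If z_j·g ∈ ⟨f₁, f₂⟩ for every j = 1,…,n, then g ∈ ⟨f₁, f₂⟩. Equivalently, for n ≥ 3 the degree-(m+1) containment ⟨g⟩_{m+1} ⊆ ⟨f₁,f₂⟩_{m+1} with g ∉ ⟨f₁,f₂⟩ is impossible, so P = 2 cannot occur in Theorem 1.5 when n ≥ 3. -/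
/-!
Suppose first that `f₁, f₂` are coprime and write `x g = L_x f₁ + M_x f₂` for each variable `x`.
For two variables `x, y` the relation `(y L_x - x L_y) f₁ = (x M_y - y M_x) f₂` forces both
brackets to be `q_{xy} f₂` and `q_{xy} f₁`, and for a third variable `z` one finds
`z q_{xy} = y q_{xz} - x q_{yz}`. As `x, y, z` is a regular sequence, `q_{xy} ∈ (x, y)`, and
substituting this back exhibits `x g` as `x` times an element of `(f₁, f₂)`.
In general a common factor `c` of `f₁, f₂` divides `x g` and `y g`, hence `g`, and cancels.
-/

open MvPolynomial

theorem dvd_of_mem_span_pair_mul {R : Type*} [CommSemiring R] {a b c u : R}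
    (hu : u ∈ Ideal.span {c * a, c * b}) : c ∣ u := by
  obtain ⟨s, t, rfl⟩ := Ideal.mem_span_pair.mp hu
  exact ⟨s * a + t * b, by ring⟩

section RegularSequence

variable {R : Type*} [CommRing R] [IsDomain R]

theorem isRelPrime_of_dvd_mul_imp_dvd {x y : R} (hx : x ≠ 0)
    (hxy : ∀ q, x ∣ y * q → x ∣ q) : IsRelPrime x y := by
  rintro c ⟨x', rfl⟩ ⟨y', rfl⟩
  obtain ⟨e, he⟩ := hxy x' ⟨y', by ring⟩
  have hx' : x' ≠ 0 := right_ne_zero_of_mul hx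
  refine IsUnit.of_mul_eq_one e (mul_left_cancel₀ hx' ?_)
  linear_combination -he

theorem dvd_of_dvd_mul_of_isRelPrime [DecompositionMonoid R] {x y d g : R}
    (hxy : IsRelPrime x y) (hx : d ∣ x * g) (hy : d ∣ y * g) : d ∣ g := by
  obtain ⟨d₁, d₂, hd₁, ⟨g', rfl⟩, rfl⟩ := exists_dvd_and_dvd_of_dvd_mul hx
  rcases eq_or_ne d₂ 0 with rfl | hd₂
  · simp
  have : d₁ ∣ y * g' := by
    rw [← mul_dvd_mul_iff_right hd₂]
    convert hy using 1
    ring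
  rw [mul_comm d₁]
  exact mul_dvd_mul_left d₂ ((hxy.of_dvd_left hd₁).dvd_of_dvd_mul_left this)

theorem IsRelPrime.exists_eq_mul_of_mul_eq_mul [DecompositionMonoid R] {a b D E : R}
    (hab : IsRelPrime a b) (hb : b ≠ 0) (h : D * a = E * b) : ∃ q, D = q * b ∧ E = q * a := by
  obtain ⟨q, rfl⟩ := hab.symm.dvd_of_dvd_mul_right ⟨E, by rw [h, mul_comm]⟩
  exact ⟨q, mul_comm _ _, mul_left_cancel₀ hb (by linear_combination -h)⟩

theorem mul_mem_span_pair_mul_iff {a b c u : R} (hc : c ≠ 0) :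
    c * u ∈ Ideal.span {c * a, c * b} ↔ u ∈ Ideal.span {a, b} := by
  simp only [Ideal.mem_span_pair]
  constructor <;> rintro ⟨s, t, h⟩ <;> refine ⟨s, t, ?_⟩
  · exact mul_left_cancel₀ hc (by linear_combination h)
  · linear_combination c * h

theorem mem_span_pair_of_syzygy {x y f₁ f₂ g L₀ M₀ L₁ M₁ q : R} (hx : x ≠ 0)
    (hxy : ∀ q, x ∣ y * q → x ∣ q) (hg : x * g = L₀ * f₁ + M₀ * f₂)
    (hq : q ∈ Ideal.span {x, y}) (hL : y * L₀ - x * L₁ = q * f₂)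
    (hM : x * M₁ - y * M₀ = q * f₁) : g ∈ Ideal.span {f₁, f₂} := by
  obtain ⟨u, v, huv⟩ := Ideal.mem_span_pair.mp hq
  obtain ⟨w₁, hw₁⟩ : x ∣ L₀ - v * f₂ :=
    hxy _ ⟨L₁ + u * f₂, by linear_combination hL - f₂ * huv⟩
  obtain ⟨w₂, hw₂⟩ : x ∣ M₀ + v * f₁ :=
    hxy _ ⟨M₁ - u * f₁, by linear_combination f₁ * huv - hM⟩
  refine Ideal.mem_span_pair.mpr ⟨w₁, w₂, mul_left_cancel₀ hx ?_⟩
  linear_combination -f₁ * hw₁ - f₂ * hw₂ - hg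

theorem mem_span_pair_of_isRelPrime [DecompositionMonoid R] {x y z f₁ f₂ g : R}
    (hf : IsRelPrime f₁ f₂) (hx : x ≠ 0) (hxy : ∀ q, x ∣ y * q → x ∣ q)
    (hz : ∀ q, z * q ∈ Ideal.span {x, y} → q ∈ Ideal.span {x, y})
    (hgx : x * g ∈ Ideal.span {f₁, f₂}) (hgy : y * g ∈ Ideal.span {f₁, f₂})
    (hgz : z * g ∈ Ideal.span {f₁, f₂}) : g ∈ Ideal.span {f₁, f₂} := by
  rcases eq_or_ne f₂ 0 with rfl | hf₂
  · rw [Ideal.eq_top_of_isUnit_mem _ (Ideal.subset_span (Set.mem_insert f₁ _))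
      (isRelPrime_zero_right.mp hf)]
    exact Submodule.mem_top
  obtain ⟨Lx, Mx, hLMx⟩ := Ideal.mem_span_pair.mp hgx
  obtain ⟨Ly, My, hLMy⟩ := Ideal.mem_span_pair.mp hgy
  obtain ⟨Lz, Mz, hLMz⟩ := Ideal.mem_span_pair.mp hgz
  have syzygy := fun D E (h : D * f₁ = E * f₂) => hf.exists_eq_mul_of_mul_eq_mul hf₂ h
  obtain ⟨qxy, hLxy, hMxy⟩ := syzygy (y * Lx - x * Ly) (x * My - y * Mx)
    (by linear_combination y * hLMx - x * hLMy)
  obtain ⟨qxz, hLxz, -⟩ := syzygy (z * Lx - x * Lz) (x * Mz - z * Mx)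
    (by linear_combination z * hLMx - x * hLMz)
  obtain ⟨qyz, hLyz, -⟩ := syzygy (z * Ly - y * Lz) (y * Mz - z * My)
    (by linear_combination z * hLMy - y * hLMz)
  have hzq : z * qxy = y * qxz - x * qyz :=
    mul_right_cancel₀ hf₂ (by linear_combination -z * hLxy + y * hLxz - x * hLyz)
  have hqxy : qxy ∈ Ideal.span {x, y} :=
    hz _ (hzq ▸ Ideal.mem_span_pair.mpr ⟨-qyz, qxz, by ring⟩)
  exact mem_span_pair_of_syzygy hx hxy hLMx.symm hqxy hLxy hMxy

theorem mem_span_pair_of_mul_mem [UniqueFactorizationMonoid R] {x y z f₁ f₂ g : R}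
    (hx : x ≠ 0) (hxy : ∀ q, x ∣ y * q → x ∣ q)
    (hz : ∀ q, z * q ∈ Ideal.span {x, y} → q ∈ Ideal.span {x, y})
    (hgx : x * g ∈ Ideal.span {f₁, f₂}) (hgy : y * g ∈ Ideal.span {f₁, f₂})
    (hgz : z * g ∈ Ideal.span {f₁, f₂}) : g ∈ Ideal.span {f₁, f₂} := by
  obtain ⟨f₁, f₂, c, hf, rfl, rfl⟩ :
      ∃ f₁' f₂' c, IsRelPrime f₁' f₂' ∧ c * f₁' = f₁ ∧ c * f₂' = f₂ := by
    rcases eq_or_ne f₂ 0 with rfl | hf₂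
    · exact ⟨1, 0, f₁, isRelPrime_one_left, mul_one f₁, mul_zero f₁⟩
    · exact UniqueFactorizationMonoid.exists_reduced_factors' f₁ f₂ hf₂
  rcases eq_or_ne c 0 with rfl | hc
  · have hxg : x * g = 0 := by simpa using hgx
    simp [(mul_eq_zero.mp hxg).resolve_left hx]
  obtain ⟨g, rfl⟩ : c ∣ g := dvd_of_dvd_mul_of_isRelPrime (isRelPrime_of_dvd_mul_imp_dvd hx hxy)
    (dvd_of_mem_span_pair_mul hgx) (dvd_of_mem_span_pair_mul hgy)
  rw [mul_left_comm, mul_mem_span_pair_mul_iff hc] at hgx hgy hgz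
  rw [mul_mem_span_pair_mul_iff hc]
  exact mem_span_pair_of_isRelPrime hf hx hxy hz hgx hgy hgz

end RegularSequence

namespace MvPolynomial

variable {σ R : Type*}

theorem mem_span_X_pair_of_X_mul_mem [CommSemiring R] {a b t : σ} (hta : t ≠ a) (htb : t ≠ b)
    {q : MvPolynomial σ R} (hq : X t * q ∈ Ideal.span {X a, X b}) :
    q ∈ Ideal.span {X a, X b} := by
  have himg : ({X a, X b} : Set (MvPolynomial σ R)) = X '' {a, b} := by
    simp [Set.image_insert_eq]
  rw [himg, mem_ideal_span_X_image] at hq ⊢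
  intro m hm
  obtain ⟨i, hi, hine⟩ := hq (Finsupp.single t 1 + m) <| by
    rw [support_X_mul]
    exact Finset.mem_map.mpr ⟨m, hm, rfl⟩
  have hit : i ≠ t := by rintro rfl; rcases hi with rfl | rfl <;> simp_all
  exact ⟨i, hi, by simpa [Finsupp.single_apply_ne_zero, hit, Ne.symm hit] using hine⟩

theorem mem_span_pair_of_X_mul_mem [CommRing R] [IsDomain R] [UniqueFactorizationMonoid R]
    {a b t : σ} (hab : a ≠ b) (hta : t ≠ a) (htb : t ≠ b) {f₁ f₂ g : MvPolynomial σ R}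
    (h : ∀ j, X j * g ∈ Ideal.span {f₁, f₂}) : g ∈ Ideal.span {f₁, f₂} :=
  mem_span_pair_of_mul_mem (X_ne_zero a)
    (fun _ hq => (X_prime.dvd_or_dvd hq).resolve_left (X_dvd_X.not.mpr hab))
    (fun _ => mem_span_X_pair_of_X_mul_mem hta htb) (h a) (h b) (h t)

end MvPolynomial

theorem two_generated_case_general (n : ℕ) (hn : 3 ≤ n)
    (f₁ f₂ g : MvPolynomial (Fin n) ℂ)
    (h : ∀ j : Fin n, X j * g ∈ Ideal.span {f₁, f₂}) : g ∈ Ideal.span {f₁, f₂} :=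
  mem_span_pair_of_X_mul_mem (a := ⟨0, by omega⟩) (b := ⟨1, by omega⟩) (t := ⟨2, by omega⟩)
    (by simp [Fin.ext_iff]) (by simp [Fin.ext_iff]) (by simp [Fin.ext_iff]) h

/-- the case `P = 2`, `n ≥ 3`. If `n ≥ 3` and `f₁, f₂, g` are
homogeneous of degree `m` with `z_j·g ∈ ⟨f₁, f₂⟩` for every `j`, then `g ∈ ⟨f₁, f₂⟩`;
so `P = 2` cannot occur when `n ≥ 3`. -/
theorem two_generated_case (n m : ℕ) (hn : 3 ≤ n)
    (f₁ f₂ g : MvPolynomial (Fin n) ℂ)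
    (hf₁ : f₁.IsHomogeneous m) (hf₂ : f₂.IsHomogeneous m) (hg : g.IsHomogeneous m)
    (h : ∀ j : Fin n, X j * g ∈ Ideal.span {f₁, f₂}) : g ∈ Ideal.span {f₁, f₂} :=
  two_generated_case_general n hn f₁ f₂ g h
end

section
/- In the polynomial ring ℂ[z₁,z₂,z₃,z₄], let I⁺ = ⟨z₄², z₂z₃ + z₁z₄, z₂² + z₂z₄⟩ and g = z₂². Then g ∉ I⁺, and z_j·g ∈ I⁺ for every j ∈ {1,2,3,4}; equivalently, g belongs to the colon ideal I⁺ : ⟨z₁,z₂,z₃,z₄⟩ but not to I⁺. -/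
/-!
Whenever `x² = y² = 0` in a commutative `ℂ`-algebra, the generators of `I⁺` vanish at the point
`(0, x + y, 0, -2x)`, where `z₂²` takes the value `2xy`. In `ℂ[x, y]/(x², y²)`, realised as dual
numbers over the dual numbers, `xy ≠ 0`, so `z₂² ∉ I⁺`. Each `z_j z₂²` is an explicit combination
of the generators.
-/

open MvPolynomial TrivSqZeroExt
open scoped DualNumber

theorem Ideal.mul_add_mul_add_mul_mem_span_triple {R : Type*} [CommSemiring R]
    (a b c f g h : R) : a * f + b * g + c * h ∈ Ideal.span {f, g, h} :=
  add_mem (add_mem (Ideal.mul_mem_left _ a (Ideal.subset_span (by simp)))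
    (Ideal.mul_mem_left _ b (Ideal.subset_span (by simp))))
    (Ideal.mul_mem_left _ c (Ideal.subset_span (by simp)))

theorem Ideal.apply_eq_zero_of_mem_span {R S F : Type*} [CommSemiring R] [Semiring S]
    [FunLike F R S] [RingHomClass F R S] (φ : F) {s : Set R} (hs : ∀ q ∈ s, φ q = 0) {p : R}
    (hp : p ∈ Ideal.span s) : φ p = 0 :=
  (Ideal.span_le (I := RingHom.ker φ)).mpr hs hp

theorem X_mul_X_one_sq_mem_span (j : Fin 4) :
    (X j * X 1 ^ 2 : MvPolynomial (Fin 4) ℂ) ∈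
      Ideal.span {X 3 ^ 2, X 1 * X 2 + X 0 * X 3, X 1 ^ 2 + X 1 * X 3} := by
  match j with
  | 0 =>
    convert Ideal.mul_add_mul_add_mul_mem_span_triple (X 0 : MvPolynomial (Fin 4) ℂ)
      (-X 1 - X 3) (X 0 + X 2) _ _ _ using 2
    ring
  | 1 =>
    convert Ideal.mul_add_mul_add_mul_mem_span_triple (X 1 : MvPolynomial (Fin 4) ℂ)
      0 (X 1 - X 3) _ _ _ using 2
    ring
  | 2 =>
    convert Ideal.mul_add_mul_add_mul_mem_span_triple (X 0 : MvPolynomial (Fin 4) ℂ)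
      (-X 3) (X 2) _ _ _ using 2
    ring
  | 3 =>
    convert Ideal.mul_add_mul_add_mul_mem_span_triple (-X 1 : MvPolynomial (Fin 4) ℂ)
      0 (X 3) _ _ _ using 2
    ring

section

variable {S : Type*} [CommRing S] [Algebra ℂ S] {x y : S}

theorem aeval_generators_eq_zero (hx : x * x = 0) (hy : y * y = 0) :
    ∀ q ∈ ({X 3 ^ 2, X 1 * X 2 + X 0 * X 3, X 1 ^ 2 + X 1 * X 3} :
      Set (MvPolynomial (Fin 4) ℂ)), aeval ![0, x + y, 0, -2 * x] q = 0 := by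
  rintro q (rfl | rfl | rfl) <;>
    simp only [map_add, map_mul, map_pow, aeval_X, Matrix.cons_val, Matrix.cons_val_zero,
      Matrix.cons_val_one]
  · linear_combination 4 * hx
  · ring
  · linear_combination hy - hx

theorem aeval_X_one_sq (hx : x * x = 0) (hy : y * y = 0) :
    aeval ![0, x + y, 0, -2 * x] (X 1 ^ 2 : MvPolynomial (Fin 4) ℂ) = 2 * (x * y) := by
  simp only [map_pow, aeval_X, Matrix.cons_val_one, Matrix.cons_val_zero]
  linear_combination hx + hy

theorem X_one_sq_not_mem_span (hx : x * x = 0) (hy : y * y = 0) (hxy : x * y ≠ 0) :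
    (X 1 ^ 2 : MvPolynomial (Fin 4) ℂ) ∉
      Ideal.span {X 3 ^ 2, X 1 * X 2 + X 0 * X 3, X 1 ^ 2 + X 1 * X 3} := by
  intro h
  have h0 := Ideal.apply_eq_zero_of_mem_span _ (aeval_generators_eq_zero hx hy) h
  rw [aeval_X_one_sq hx hy, two_mul, ← two_smul ℂ, smul_eq_zero] at h0
  exact h0.elim (two_ne_zero ·) hxy

end

theorem DualNumber.inl_eps_mul_inl_eps {R : Type*} [Semiring R] :
    (inl ε * inl ε : R[ε][ε]) = 0 := by
  rw [← inl_mul, DualNumber.eps_mul_eps, inl_zero]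

theorem DualNumber.inl_eps_mul_eps_ne_zero {R : Type*} [Semiring R] [Nontrivial R] :
    (inl ε * ε : R[ε][ε]) ≠ 0 := by
  rw [DualNumber.eps, DualNumber.eps, inl_mul_inr, smul_eq_mul, mul_one]
  exact inr_injective.ne (inr_injective.ne one_ne_zero)

/-- In `ℂ[z₁,z₂,z₃,z₄]`, with
`I⁺ = ⟨z₄², z₂z₃ + z₁z₄, z₂² + z₂z₄⟩` and `g = z₂²`, we have `g ∉ I⁺` while
`z_j·g ∈ I⁺` for every `j`; equivalently `g ∈ I⁺ : ⟨z₁,z₂,z₃,z₄⟩` but `g ∉ I⁺`. -/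
theorem explicit_example_colon_membership :
    (X 1 ^ 2 : MvPolynomial (Fin 4) ℂ) ∉
      Ideal.span {X 3 ^ 2, X 1 * X 2 + X 0 * X 3, X 1 ^ 2 + X 1 * X 3} ∧
    (∀ j : Fin 4, (X j * X 1 ^ 2 : MvPolynomial (Fin 4) ℂ) ∈
      Ideal.span {X 3 ^ 2, X 1 * X 2 + X 0 * X 3, X 1 ^ 2 + X 1 * X 3}) ∧
    (X 1 ^ 2 : MvPolynomial (Fin 4) ℂ) ∈
      Submodule.colon
        (Ideal.span {X 3 ^ 2, X 1 * X 2 + X 0 * X 3, X 1 ^ 2 + X 1 * X 3})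
        (Ideal.span (Set.range (X : Fin 4 → MvPolynomial (Fin 4) ℂ))) := by
  refine ⟨X_one_sq_not_mem_span (S := ℂ[ε][ε]) DualNumber.inl_eps_mul_inl_eps
    DualNumber.eps_mul_eps DualNumber.inl_eps_mul_eps_ne_zero, X_mul_X_one_sq_mem_span, ?_⟩
  rw [Ideal.colon_span, Submodule.mem_colon]
  rintro _ ⟨j, rfl⟩
  rw [smul_eq_mul, mul_comm (X 1 ^ 2)]
  exact X_mul_X_one_sq_mem_span j
end

section
/- In the polynomial ring ℂ[z₁,z₂,z₃,z₄], let I⁺ = ⟨z₄², z₂z₃ + z₁z₄, z₂² + z₂z₄⟩. Then the colon ideal I⁺ : ⟨z₂²⟩ equals the homogeneous maximal ideal 𝔪 = ⟨z₁,z₂,z₃,z₄⟩; consequently, 𝔪 is an associated prime of the module ℂ[z₁,z₂,z₃,z₄]/I⁺. -/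
/-!
Every `zᵢ z₂²` is an explicit combination of the generators of `I⁺`, so `𝔪 ≤ I⁺ : ⟨z₂²⟩`; as `𝔪`
is maximal, equality holds unless `z₂² ∈ I⁺`. That is excluded by the ℂ-algebra map
`z₂ ↦ c - b, z₄ ↦ 2b, z₁, z₃ ↦ 0` into `ℂ[b, c]/(b², c²)`, which kills `I⁺` but sends `z₂²`
to `-2bc ≠ 0`. Finally, `I⁺ : ⟨z₂²⟩` is the annihilator of the class of `z₂²` in the quotient,
so the prime `𝔪` is associated.
-/

open MvPolynomial

namespace MvPolynomial

variable {σ : Type*}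

lemma idealOfVars_eq_ker_constantCoeff {R : Type*} [CommSemiring R] :
    idealOfVars σ R = RingHom.ker (constantCoeff : MvPolynomial σ R →+* R) := by
  ext p
  rw [idealOfVars, ← Set.image_univ, mem_ideal_span_X_image, RingHom.mem_ker, constantCoeff_eq]
  simp only [Set.mem_univ, true_and, ne_eq, mem_support_iff]
  refine ⟨fun h => by_contra fun h0 => ?_, fun h m hm => ?_⟩
  · obtain ⟨i, hi⟩ := h 0 h0
    exact hi rfl
  · by_contra! hm0
    have hm_zero : m = 0 := Finsupp.ext hm0
    exact hm (hm_zero ▸ h)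

lemma isMaximal_idealOfVars {K : Type*} [Field K] : (idealOfVars σ K).IsMaximal := by
  rw [idealOfVars_eq_ker_constantCoeff]
  exact RingHom.ker_isMaximal_of_surjective _ fun r => ⟨C r, constantCoeff_C σ r⟩

end MvPolynomial

namespace Ideal

variable {R : Type*} [CommRing R] {I P : Ideal R} {a : R}

lemma colon_span_singleton_eq_of_isMaximal (hP : P.IsMaximal) (ha : a ∉ I)
    (hle : P ≤ I.colon (span {a})) : I.colon (span {a}) = P := by
  refine (hP.eq_of_le ?_ hle).symm
  rwa [Ne, colon_span, Submodule.colon_eq_top_iff_subset, Set.singleton_subset_iff]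

lemma mem_associatedPrimes_quotient_of_colon_eq (hP : P.IsPrime) (h : I.colon (span {a}) = P) :
    P ∈ associatedPrimes R (R ⧸ I) := by
  refine ⟨hP, Quotient.mk I a, ?_⟩
  have hann : (⊥ : Submodule R (R ⧸ I)).colon {Quotient.mk I a} = I.colon (span {a}) := by
    ext r
    rw [Submodule.mem_colon_singleton, mem_colon_span_singleton, Submodule.mem_bot,
      Algebra.smul_def, Quotient.algebraMap_eq, ← map_mul, Quotient.eq_zero_iff_mem]
  rw [hann, h, hP.radical]

end Ideal

local notation "I⁺" => Ideal.span {(X 3 ^ 2 : MvPolynomial (Fin 4) ℂ),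
  X 1 * X 2 + X 0 * X 3, X 1 ^ 2 + X 1 * X 3}

lemma idealOfVars_le_colon_sq_X_one :
    idealOfVars (Fin 4) ℂ ≤ I⁺.colon (Ideal.span {(X 1 ^ 2 : MvPolynomial (Fin 4) ℂ)}) := by
  rw [idealOfVars, Ideal.span_le, Set.range_subset_iff]
  intro i
  rw [SetLike.mem_coe, Ideal.mem_colon_span_singleton, Ideal.span, Submodule.mem_span_triple]
  simp only [smul_eq_mul]
  fin_cases i <;> simp only [Fin.reduceFinMk, Fin.isValue]
  · exact ⟨X 0, -(X 1 + X 3), X 0 + X 2, by ring⟩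
  · exact ⟨X 1, 0, X 1 - X 3, by ring⟩
  · exact ⟨X 0, -X 3, X 2, by ring⟩
  · exact ⟨-X 1, 0, X 3, by ring⟩

lemma sq_X_one_not_mem : (X 1 ^ 2 : MvPolynomial (Fin 4) ℂ) ∉ I⁺ := by
  set b : DualNumber (DualNumber ℂ) := DualNumber.eps
  set c : DualNumber (DualNumber ℂ) := TrivSqZeroExt.inl DualNumber.eps
  have hb : b * b = 0 := DualNumber.eps_mul_eps
  have hc : c * c = 0 := by simp [c, ← TrivSqZeroExt.inl_mul]
  have hz : (c - b) ^ 2 ≠ 0 := fun h => by simpa [b, c, sq] using congrArg (·.snd.snd) h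
  set f := aeval (R := ℂ) ![0, c - b, 0, 2 * b]
  have hle : I⁺ ≤ RingHom.ker f := by
    simp only [Ideal.span_le, Set.insert_subset_iff, Set.singleton_subset_iff, SetLike.mem_coe,
      RingHom.mem_ker, map_pow, map_add, map_mul, aeval_X, Matrix.cons_val, mul_zero, zero_mul,
      add_zero, true_and, f]
    exact ⟨by linear_combination 4 * hb, by linear_combination hc - hb⟩
  exact fun h => hz (by simpa [f] using hle h)

/-- In `ℂ[z₁,z₂,z₃,z₄]`, with
`I⁺ = ⟨z₄², z₂z₃ + z₁z₄, z₂² + z₂z₄⟩`, the colon ideal `I⁺ : ⟨z₂²⟩` equals the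
homogeneous maximal ideal `𝔪 = ⟨z₁,z₂,z₃,z₄⟩`; consequently `𝔪` is an associated
prime of `ℂ[z₁,z₂,z₃,z₄]/I⁺`. -/
theorem explicit_example_colon_eq_maximal :
    Submodule.colon
        (Ideal.span {(X 3 ^ 2 : MvPolynomial (Fin 4) ℂ),
          X 1 * X 2 + X 0 * X 3, X 1 ^ 2 + X 1 * X 3})
        (Ideal.span {(X 1 ^ 2 : MvPolynomial (Fin 4) ℂ)}) =
      Ideal.span (Set.range (X : Fin 4 → MvPolynomial (Fin 4) ℂ)) ∧
    Ideal.span (Set.range (X : Fin 4 → MvPolynomial (Fin 4) ℂ)) ∈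
      associatedPrimes (MvPolynomial (Fin 4) ℂ)
        (MvPolynomial (Fin 4) ℂ ⧸
          Ideal.span {(X 3 ^ 2 : MvPolynomial (Fin 4) ℂ),
            X 1 * X 2 + X 0 * X 3, X 1 ^ 2 + X 1 * X 3}) := by
  have hcolon := Ideal.colon_span_singleton_eq_of_isMaximal isMaximal_idealOfVars
    sq_X_one_not_mem idealOfVars_le_colon_sq_X_one
  exact ⟨hcolon,
    Ideal.mem_associatedPrimes_quotient_of_colon_eq isMaximal_idealOfVars.isPrime hcolon⟩
end

section
/- In the polynomial ring ℂ[z₁,z₂,z₃,z₄], the four quadratic polynomials f₁ = z₄², f₂ = z₂z₃ + z₁z₄, f₃ = z₂² + z₂z₄, and g = z₂² are homogeneous of degree 2, the set {f₁, f₂, f₃, g} is linearly independent over ℂ, and z_j·g ∈ ⟨f₁,f₂,f₃⟩ for every j ∈ {1,2,3,4}. Hence for n = 4 there exist P = 3 < n homogeneous polynomials f₁,…,f_P and a homogeneous g of the same degree, all linearly independent, with the degree-3 component of ⟨g⟩ contained in the degree-3 component of ⟨f₁,f₂,f₃⟩. -/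
open MvPolynomial

lemma coeff_XX_aux (m : Fin 4 →₀ ℕ) (i j : Fin 4) :
    coeff m (X i * X j : MvPolynomial (Fin 4) ℂ)
      = if Finsupp.single i 1 + Finsupp.single j 1 = m then 1 else 0 := by
  classical
  rw [X, X, monomial_mul, coeff_monomial, mul_one]

/-- In `ℂ[z₁,z₂,z₃,z₄]`, the quadrics `f₁ = z₄²`,
`f₂ = z₂z₃ + z₁z₄`, `f₃ = z₂² + z₂z₄`, `g = z₂²` are homogeneous of degree `2`,
linearly independent over `ℂ`, and `z_j·g ∈ ⟨f₁,f₂,f₃⟩` for every `j`; hence for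
`n = 4` there is an example with `P = 3 < n`. -/
theorem explicit_example_P_three_n_four :
    (X 3 ^ 2 : MvPolynomial (Fin 4) ℂ).IsHomogeneous 2 ∧
    (X 1 * X 2 + X 0 * X 3 : MvPolynomial (Fin 4) ℂ).IsHomogeneous 2 ∧
    (X 1 ^ 2 + X 1 * X 3 : MvPolynomial (Fin 4) ℂ).IsHomogeneous 2 ∧
    (X 1 ^ 2 : MvPolynomial (Fin 4) ℂ).IsHomogeneous 2 ∧
    LinearIndependent ℂ
      ![(X 3 ^ 2 : MvPolynomial (Fin 4) ℂ), X 1 * X 2 + X 0 * X 3,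
        X 1 ^ 2 + X 1 * X 3, X 1 ^ 2] ∧
    ∀ j : Fin 4, (X j * X 1 ^ 2 : MvPolynomial (Fin 4) ℂ) ∈
      Ideal.span {X 3 ^ 2, X 1 * X 2 + X 0 * X 3, X 1 ^ 2 + X 1 * X 3} := by
  refine ⟨(isHomogeneous_X _ _).pow 2,
    ((isHomogeneous_X _ _).mul (isHomogeneous_X _ _)).add
      ((isHomogeneous_X _ _).mul (isHomogeneous_X _ _)),
    ((isHomogeneous_X _ _).pow 2).add
      ((isHomogeneous_X _ _).mul (isHomogeneous_X _ _)),
    (isHomogeneous_X _ _).pow 2, ?_, ?_⟩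
  · rw [Fintype.linearIndependent_iff]
    intro c hc
    have key : ∀ m : Fin 4 →₀ ℕ,
        coeff m (∑ i, c i • ![(X 3 ^ 2 : MvPolynomial (Fin 4) ℂ),
          X 1 * X 2 + X 0 * X 3, X 1 ^ 2 + X 1 * X 3, X 1 ^ 2] i) = 0 := by
      intro m; rw [hc]; simp
    have k1 := key (Finsupp.single 3 2)
    have k2 := key (Finsupp.single 1 1 + Finsupp.single 2 1)
    have k3 := key (Finsupp.single 1 1 + Finsupp.single 3 1)
    have k4 := key (Finsupp.single 1 2)
    simp only [Fin.sum_univ_four, Matrix.cons_val_zero, Matrix.cons_val_one, Matrix.head_cons,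
      Matrix.cons_val_two, Matrix.tail_cons, Matrix.cons_val_three, coeff_add, coeff_smul,
      smul_eq_mul, coeff_XX_aux, coeff_X_pow, Finsupp.ext_iff, Finsupp.add_apply,
      Finsupp.single_apply, Fin.forall_fin_succ, Fin.succ_zero_eq_one] at k1 k2 k3 k4
    norm_num at k1 k2 k3 k4
    intro i
    fin_cases i <;> simp_all
  · set f1 : MvPolynomial (Fin 4) ℂ := X 3 ^ 2 with hf1
    set f2 : MvPolynomial (Fin 4) ℂ := X 1 * X 2 + X 0 * X 3 with hf2
    set f3 : MvPolynomial (Fin 4) ℂ := X 1 ^ 2 + X 1 * X 3 with hf3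
    have h1 : f1 ∈ Ideal.span {f1, f2, f3} := Ideal.subset_span (by simp)
    have h2 : f2 ∈ Ideal.span {f1, f2, f3} := Ideal.subset_span (by simp)
    have h3 : f3 ∈ Ideal.span {f1, f2, f3} := Ideal.subset_span (by simp)
    intro j
    fin_cases j <;> simp only [show ((⟨0, by norm_num⟩ : Fin 4)) = 0 from rfl,
      show ((⟨1, by norm_num⟩ : Fin 4)) = 1 from rfl,
      show ((⟨2, by norm_num⟩ : Fin 4)) = 2 from rfl,
      show ((⟨3, by norm_num⟩ : Fin 4)) = 3 from rfl]
    · have : (X 0 * X 1 ^ 2 : MvPolynomial (Fin 4) ℂ)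
        = X 0 * f3 - X 1 * f2 + X 2 * f3 - X 3 * f2 + X 0 * f1 := by rw [hf1, hf2, hf3]; ring
      rw [this]
      exact Ideal.add_mem _ (Ideal.sub_mem _ (Ideal.add_mem _ (Ideal.sub_mem _
        (Ideal.mul_mem_left _ _ h3) (Ideal.mul_mem_left _ _ h2)) (Ideal.mul_mem_left _ _ h3))
        (Ideal.mul_mem_left _ _ h2)) (Ideal.mul_mem_left _ _ h1)
    · have : (X 1 * X 1 ^ 2 : MvPolynomial (Fin 4) ℂ)
        = X 1 * f3 - X 3 * f3 + X 1 * f1 := by rw [hf1, hf3]; ring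
      rw [this]
      exact Ideal.add_mem _ (Ideal.sub_mem _ (Ideal.mul_mem_left _ _ h3)
        (Ideal.mul_mem_left _ _ h3)) (Ideal.mul_mem_left _ _ h1)
    · have : (X 2 * X 1 ^ 2 : MvPolynomial (Fin 4) ℂ)
        = X 2 * f3 - X 3 * f2 + X 0 * f1 := by rw [hf1, hf2, hf3]; ring
      rw [this]
      exact Ideal.add_mem _ (Ideal.sub_mem _ (Ideal.mul_mem_left _ _ h3)
        (Ideal.mul_mem_left _ _ h2)) (Ideal.mul_mem_left _ _ h1)
    · have : (X 3 * X 1 ^ 2 : MvPolynomial (Fin 4) ℂ)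
        = X 3 * f3 - X 1 * f1 := by rw [hf1, hf3]; ring
      rw [this]
      exact Ideal.sub_mem _ (Ideal.mul_mem_left _ _ h3) (Ideal.mul_mem_left _ _ h1)
end

section
/- For every n ≥ 4, there exists an ideal I of ℂ[z₁,…,zₙ] generated by three homogeneous polynomials of degree n − 2 such that the homogeneous maximal ideal 𝔪 = ⟨z₁,…,zₙ⟩ is an associated prime of the module ℂ[z₁,…,zₙ]/I; equivalently, there exists a polynomial g ∉ I with I : ⟨g⟩ = 𝔪. -/
/-! Write `m = n - 2`, `x, y` for the first two variables and `z₀, …, z_{m-1}` for the others,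
and take `I = (x^m, y^m, F)` with `F = ∑ᵢ x^(m-1-i) y^i zᵢ` and `g = x^(m-1) y^(m-1)`.
Then `x g` and `y g` lie in `(x^m, y^m)`, and `x^k y^(m-1-k) F ≡ z_k g` modulo `(x^m, y^m)`,
so `𝔪 ⊆ I : g`. Conversely `I` lies in the monomial ideal `(x^m, y^m, z₀, …, z_{m-1})`, none of
whose generators divides `g`, so `p g ∈ I` forces `p(0) = 0`. Hence `I : g = 𝔪`, and since `𝔪`
is prime it is the annihilator of the class of `g` in `ℂ[z] ⧸ I`. -/

open MvPolynomial

namespace MvPolynomial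

variable {σ R : Type*} [CommRing R]

theorem mem_idealOfVars_iff {p : MvPolynomial σ R} :
    p ∈ idealOfVars σ R ↔ constantCoeff p = 0 := by
  simpa [constantCoeff_eq, Finsupp.degree_eq_zero_iff] using mem_pow_idealOfVars_iff' 1 p

theorem isPrime_idealOfVars [IsDomain R] : (idealOfVars σ R).IsPrime := by
  have : idealOfVars σ R = RingHom.ker constantCoeff := Ideal.ext fun _ => mem_idealOfVars_iff
  exact this ▸ RingHom.ker_isPrime _

theorem constantCoeff_eq_zero_of_mul_monomial_mem {s : Set (σ →₀ ℕ)} {μ : σ →₀ ℕ}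
    (hμ : ∀ d ∈ s, ¬d ≤ μ) {p : MvPolynomial σ R}
    (hp : p * monomial μ 1 ∈ Ideal.span ((monomial · (1 : R)) '' s)) :
    constantCoeff p = 0 := by
  by_contra hp0
  have hμp : μ ∈ (p * monomial μ 1).support := by
    rwa [mem_support_iff, coeff_mul_monomial', if_pos le_rfl, tsub_self, mul_one,
      ← constantCoeff_eq]
  obtain ⟨d, hd, hdμ⟩ := mem_ideal_span_monomial_image.1 hp μ hμp
  exact hμ d hd hdμ

end MvPolynomial

theorem Ideal.mem_associatedPrimes_quotient_of_colon_eq_s14 {R : Type*} [CommRing R]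
    {I P : Ideal R} [hP : P.IsPrime] {g : R} (h : I.colon (Ideal.span {g}) = P) :
    P ∈ associatedPrimes R (R ⧸ I) := by
  refine ⟨hP, Ideal.Quotient.mk I g, ?_⟩
  suffices Submodule.colon ⊥ {Ideal.Quotient.mk I g} = I.colon (Ideal.span {g}) by
    rw [this, h, hP.radical]
  ext r
  rw [Submodule.mem_colon_singleton, Ideal.mem_colon_span_singleton, Submodule.mem_bot,
    Algebra.smul_def, Ideal.Quotient.algebraMap_eq, ← map_mul, Ideal.Quotient.eq_zero_iff_mem]

section Bruns

variable {R : Type*} [CommRing R] {m : ℕ}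

noncomputable def brunsForm (x y : R) (z : Fin m → R) : R :=
  ∑ i : Fin m, x ^ (m - 1 - (i : ℕ)) * y ^ (i : ℕ) * z i

theorem brunsForm_mem_span_range (x y : R) (z : Fin m → R) :
    brunsForm x y z ∈ Ideal.span (Set.range z) :=
  Ideal.sum_mem _ fun i _ => Ideal.mul_mem_left _ _ (Ideal.subset_span ⟨i, rfl⟩)

theorem pow_mul_pow_mem_span_pow_pow (x y : R) {n p q : ℕ} (h : n ≤ p ∨ n ≤ q) :
    x ^ p * y ^ q ∈ Ideal.span {x ^ n, y ^ n} := by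
  rcases h with h | h <;> obtain ⟨c, rfl⟩ := Nat.exists_eq_add_of_le h
  · rw [pow_add, mul_assoc]
    exact Ideal.mul_mem_right _ _ (Ideal.subset_span (Set.mem_insert _ _))
  · rw [pow_add, mul_comm, mul_assoc]
    exact Ideal.mul_mem_right _ _ (Ideal.subset_span (Set.mem_insert_of_mem _ rfl))

theorem span_pow_pow_le_span_brunsForm (x y : R) (z : Fin m → R) :
    Ideal.span {x ^ m, y ^ m} ≤ Ideal.span {x ^ m, y ^ m, brunsForm x y z} :=
  Ideal.span_mono (Set.insert_subset_insert (by simp))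

theorem pow_mul_pow_mul_mem_span_brunsForm (x y : R) (z : Fin m → R) (k : Fin m) :
    x ^ (m - 1) * y ^ (m - 1) * z k ∈ Ideal.span {x ^ m, y ^ m, brunsForm x y z} := by
  set t : Fin m → R :=
    fun i => x ^ ((k : ℕ) + (m - 1 - i)) * y ^ (m - 1 - k + (i : ℕ)) * z i
  have hmul : x ^ (k : ℕ) * y ^ (m - 1 - k) * brunsForm x y z = ∑ i, t i := by
    rw [brunsForm, Finset.mul_sum]
    exact Finset.sum_congr rfl fun i _ => by ring
  have hk : x ^ (m - 1) * y ^ (m - 1) * z k =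
      x ^ (k : ℕ) * y ^ (m - 1 - k) * brunsForm x y z - ∑ i ∈ Finset.univ.erase k, t i := by
    rw [hmul, ← Finset.add_sum_erase _ _ (Finset.mem_univ k), add_sub_cancel_right]
    simp only [t, show (k : ℕ) + (m - 1 - k) = m - 1 by omega,
      show m - 1 - k + (k : ℕ) = m - 1 by omega]
  rw [hk]
  refine sub_mem (Ideal.mul_mem_left _ _ (Ideal.subset_span (by simp)))
    (Ideal.sum_mem _ fun i hi => Ideal.mul_mem_right _ _ ?_)
  have hik : (i : ℕ) ≠ k := Fin.val_ne_of_ne (Finset.ne_of_mem_erase hi)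
  exact span_pow_pow_le_span_brunsForm x y z
    (pow_mul_pow_mem_span_pow_pow x y (by omega))

theorem span_le_colon_span_brunsForm (x y : R) (z : Fin m → R) (hm : 1 ≤ m) :
    Ideal.span (insert x (insert y (Set.range z))) ≤
      (Ideal.span {x ^ m, y ^ m, brunsForm x y z}).colon
        (Ideal.span {x ^ (m - 1) * y ^ (m - 1)}) := by
  rw [Ideal.span_le]
  rintro r (rfl | rfl | ⟨k, rfl⟩) <;> rw [SetLike.mem_coe, Ideal.mem_colon_span_singleton]
  · rw [← mul_assoc, ← pow_succ']
    exact span_pow_pow_le_span_brunsForm r y z (pow_mul_pow_mem_span_pow_pow r y (by omega))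
  · rw [mul_left_comm, ← pow_succ']
    exact span_pow_pow_le_span_brunsForm x r z (pow_mul_pow_mem_span_pow_pow x r (by omega))
  · rw [mul_comm]
    exact pow_mul_pow_mul_mem_span_brunsForm x y z k

section Polynomials

variable {σ : Type*} (a b : σ) (e : Fin m → σ)

theorem isHomogeneous_brunsForm :
    (brunsForm (X a) (X b) (fun i => X (e i)) : MvPolynomial σ R).IsHomogeneous m := by
  refine IsHomogeneous.sum _ _ _ fun i _ => ?_
  have hdeg : m - 1 - (i : ℕ) + i + 1 = m := by omega
  simpa only [hdeg] using ((isHomogeneous_X_pow a (m - 1 - (i : ℕ))).mul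
    (isHomogeneous_X_pow b (i : ℕ))).mul (isHomogeneous_X R (e i))

theorem span_brunsForm_le_span_monomial :
    Ideal.span {X a ^ m, X b ^ m, brunsForm (X a) (X b) (fun i => X (e i))} ≤
      Ideal.span ((monomial · (1 : R)) '' insert (Finsupp.single a m)
        (insert (Finsupp.single b m) (Set.range fun i => Finsupp.single (e i) 1))) := by
  have himage : (monomial · (1 : R)) '' insert (Finsupp.single a m)
      (insert (Finsupp.single b m) (Set.range fun i => Finsupp.single (e i) 1)) =
        insert (X a ^ m) (insert (X b ^ m) (Set.range (fun i => X (e i)))) := by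
    simp only [Set.image_insert_eq, ← Set.range_comp, X_pow_eq_monomial, Function.comp_def]
    rfl
  rw [himage, Ideal.span_le]
  rintro r (rfl | rfl | rfl)
  · exact Ideal.subset_span (Set.mem_insert _ _)
  · exact Ideal.subset_span (Set.mem_insert_of_mem _ (Set.mem_insert _ _))
  · exact Ideal.span_mono (Set.subset_insert _ _ |>.trans (Set.subset_insert _ _))
      (brunsForm_mem_span_range _ _ _)

theorem constantCoeff_eq_zero_of_mul_mem_span_brunsForm (hm : 1 ≤ m) (hab : a ≠ b)
    (hea : ∀ i, e i ≠ a) (heb : ∀ i, e i ≠ b) {p : MvPolynomial σ R}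
    (hp : p * (X a ^ (m - 1) * X b ^ (m - 1)) ∈
      Ideal.span {X a ^ m, X b ^ m, brunsForm (X a) (X b) (fun i => X (e i))}) :
    constantCoeff p = 0 := by
  have hg : X a ^ (m - 1) * X b ^ (m - 1) =
      monomial (Finsupp.single a (m - 1) + Finsupp.single b (m - 1)) (1 : R) := by
    rw [X_pow_eq_monomial, X_pow_eq_monomial, monomial_mul, one_mul]
  rw [hg] at hp
  refine constantCoeff_eq_zero_of_mul_monomial_mem ?_ (span_brunsForm_le_span_monomial a b e hp)
  rintro d (rfl | rfl | ⟨i, rfl⟩) hd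
  · have had := hd a
    simp [hab] at had
    omega
  · have hbd := hd b
    simp [hab.symm] at hbd
    omega
  · simpa [hea i, heb i] using hd (e i)

theorem colon_span_brunsForm_eq_idealOfVars (hm : 1 ≤ m) (hab : a ≠ b)
    (hea : ∀ i, e i ≠ a) (heb : ∀ i, e i ≠ b) (he : ∀ j, j = a ∨ j = b ∨ j ∈ Set.range e) :
    (Ideal.span {X a ^ m, X b ^ m, brunsForm (X a) (X b) (fun i => X (e i))}).colon
      (Ideal.span {(X a ^ (m - 1) * X b ^ (m - 1) : MvPolynomial σ R)}) = idealOfVars σ R := by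
  refine le_antisymm (fun p hp => mem_idealOfVars_iff.2 ?_) (Ideal.span_le.2 ?_)
  · exact constantCoeff_eq_zero_of_mul_mem_span_brunsForm a b e hm hab hea heb
      (Ideal.mem_colon_span_singleton.1 hp)
  · rintro _ ⟨j, rfl⟩
    refine span_le_colon_span_brunsForm _ _ _ hm (Ideal.subset_span ?_)
    rcases he j with rfl | rfl | ⟨i, rfl⟩
    exacts [Set.mem_insert _ _, Set.mem_insert_of_mem _ (Set.mem_insert _ _),
      Set.mem_insert_of_mem _ (Set.mem_insert_of_mem _ ⟨i, rfl⟩)]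

end Polynomials

end Bruns

/-- Bruns' theorem applied to the Koszul complex of `𝔪`.
For every `n ≥ 4` there is an ideal `I` of `ℂ[z₁,…,zₙ]` generated by three homogeneous
polynomials of degree `n − 2` such that `𝔪 = ⟨z₁,…,zₙ⟩` is an associated prime of
`ℂ[z₁,…,zₙ]/I`; equivalently there is a `g ∉ I` with `I : ⟨g⟩ = 𝔪`. -/
theorem three_generated_with_maximal_associated_prime (n : ℕ) (hn : 4 ≤ n) :
    ∃ f : Fin 3 → MvPolynomial (Fin n) ℂ,
      (∀ k, (f k).IsHomogeneous (n - 2)) ∧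
      Ideal.span (Set.range (X : Fin n → MvPolynomial (Fin n) ℂ)) ∈
        associatedPrimes (MvPolynomial (Fin n) ℂ)
          (MvPolynomial (Fin n) ℂ ⧸ Ideal.span (Set.range f)) ∧
      ∃ g : MvPolynomial (Fin n) ℂ, g ∉ Ideal.span (Set.range f) ∧
        Submodule.colon (Ideal.span (Set.range f)) (Ideal.span {g}) =
          Ideal.span (Set.range (X : Fin n → MvPolynomial (Fin n) ℂ)) := by
  obtain ⟨m, rfl⟩ : ∃ m, n = m + 2 := ⟨n - 2, by omega⟩
  rw [Nat.add_sub_cancel]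
  let e : Fin m → Fin (m + 2) := fun i => i.succ.succ
  have he : ∀ j, j = 0 ∨ j = 1 ∨ j ∈ Set.range e := by
    intro j
    rcases Fin.eq_zero_or_eq_succ j with rfl | ⟨j, rfl⟩
    · exact .inl rfl
    rcases Fin.eq_zero_or_eq_succ j with rfl | ⟨j, rfl⟩
    exacts [.inr (.inl rfl), .inr (.inr ⟨j, rfl⟩)]
  have hcolon := colon_span_brunsForm_eq_idealOfVars (R := ℂ) 0 1 e (by omega) Fin.zero_ne_one
    (fun _ => Fin.succ_ne_zero _) (fun _ => (Fin.succ_injective _).ne (Fin.succ_ne_zero _)) he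
  have hprime : (idealOfVars (Fin (m + 2)) ℂ).IsPrime := isPrime_idealOfVars
  refine ⟨![X 0 ^ m, X 1 ^ m, brunsForm (X 0) (X 1) (fun i => X (e i))], ?_, ?_⟩
  · intro k
    fin_cases k
    exacts [isHomogeneous_X_pow _ _, isHomogeneous_X_pow _ _, isHomogeneous_brunsForm _ _ _]
  rw [Matrix.range_cons, Matrix.range_cons, Matrix.range_cons, Matrix.range_empty,
    Set.union_empty, Set.singleton_union, Set.singleton_union]
  refine ⟨Ideal.mem_associatedPrimes_quotient_of_colon_eq_s14 hcolon, _, fun hg => hprime.ne_top ?_,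
    hcolon⟩
  rw [← hcolon, Ideal.eq_top_iff_one, Ideal.mem_colon_span_singleton, one_mul]
  exact hg
end

section
/- Let n ≤ 3 and m ≥ 1, and let f₁,…,f_P and g be homogeneous polynomials of degree m in ℂ[z₁,…,zₙ] with g ∉ I⁺ := ⟨f₁,…,f_P⟩. If the colon ideal I⁺ : ⟨g⟩ equals the homogeneous maximal ideal 𝔪 = ⟨z₁,…,zₙ⟩ (equivalently, 𝔪 is an associated prime of ℂ[z₁,…,zₙ]/I⁺ witnessed by g), then P ≥ n. -/
open MvPolynomial

namespace ColonAux
variable {n : ℕ}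

noncomputable def sig (i : Fin n) : MvPolynomial (Fin n) ℂ →ₐ[ℂ] MvPolynomial (Fin n) ℂ :=
  aeval (fun k => if k = i then 0 else X k)

lemma sig_X_self (i : Fin n) : sig i (X i) = 0 := by simp [sig]

lemma sig_X_ne (i : Fin n) {j : Fin n} (h : j ≠ i) : sig i (X j) = X j := by
  simp [sig, h]

lemma sig_idem (i : Fin n) (q : MvPolynomial (Fin n) ℂ) : sig i (sig i q) = sig i q := by
  have h : (sig i).comp (sig i) = sig i := by
    apply MvPolynomial.algHom_ext
    intro k
    by_cases hk : k = i
    · subst hk; simp [sig_X_self]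
    · simp [sig_X_ne i hk]
  calc sig i (sig i q) = ((sig i).comp (sig i)) q := rfl
    _ = sig i q := by rw [h]

lemma X_dvd_sub_sig (i : Fin n) (q : MvPolynomial (Fin n) ℂ) :
    X i ∣ q - sig i q := by
  induction q using MvPolynomial.induction_on with
  | C a => simp [sig]
  | add p q hp hq =>
      have : p + q - sig i (p + q) = (p - sig i p) + (q - sig i q) := by
        rw [map_add]; ring
      rw [this]; exact dvd_add hp hq
  | mul_X p j hp =>
      rw [map_mul]
      by_cases h : j = i
      · subst h
        rw [sig_X_self, mul_zero, sub_zero]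
        exact Dvd.intro_left p rfl
      · rw [sig_X_ne i h]
        have : p * X j - sig i p * X j = (p - sig i p) * X j := by ring
        rw [this]
        exact Dvd.dvd.mul_right hp _

lemma X_dvd_iff_sig {i : Fin n} {q : MvPolynomial (Fin n) ℂ} :
    X i ∣ q ↔ sig i q = 0 := by
  constructor
  · rintro ⟨c, rfl⟩
    rw [map_mul, sig_X_self, zero_mul]
  · intro h
    have := X_dvd_sub_sig i q
    rwa [h, sub_zero] at this

lemma prime_X (i : Fin n) : Prime (X i : MvPolynomial (Fin n) ℂ) := by
  refine ⟨X_ne_zero i, ?_, ?_⟩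
  · intro hu
    obtain ⟨v, hv⟩ := isUnit_iff_exists_inv.mp hu
    have : sig i (X i * v) = 1 := by rw [hv]; exact map_one _
    rw [map_mul, sig_X_self, zero_mul] at this
    exact one_ne_zero this.symm
  · intro a b hab
    rw [X_dvd_iff_sig, map_mul, mul_eq_zero] at hab
    rcases hab with h | h
    · exact Or.inl (X_dvd_iff_sig.mpr h)
    · exact Or.inr (X_dvd_iff_sig.mpr h)

lemma X_not_dvd_X {i j : Fin n} (h : i ≠ j) :
    ¬ (X i ∣ (X j : MvPolynomial (Fin n) ℂ)) := by
  rw [X_dvd_iff_sig, sig_X_ne i h.symm]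
  exact X_ne_zero j

lemma X_dvd_of_dvd_mul_X {i j : Fin n} (h : i ≠ j) {a : MvPolynomial (Fin n) ℂ}
    (hd : X i ∣ X j * a) : X i ∣ a :=
  ((prime_X i).dvd_mul.mp hd).resolve_left (X_not_dvd_X h)

/-- Principal case: two distinct variables kill `g` into `(f)`. -/
lemma key1 {i j : Fin n} (h : i ≠ j) (f g : MvPolynomial (Fin n) ℂ)
    (h1 : X i * g ∈ Ideal.span {f}) (h2 : X j * g ∈ Ideal.span {f}) :
    g ∈ Ideal.span {f} := by
  rw [Ideal.mem_span_singleton] at h1 h2 ⊢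
  obtain ⟨a, ha⟩ := h1
  obtain ⟨b, hb⟩ := h2
  by_cases hf : f = 0
  · subst hf
    simp only [zero_mul] at ha
    rcases mul_eq_zero.mp ha with h' | h'
    · exact absurd h' (X_ne_zero i)
    · rw [h']
  · have hab : f * (X j * a) = f * (X i * b) := by
      have : X j * (X i * g) = X i * (X j * g) := by ring
      rw [ha, hb] at this
      linear_combination this
    have hab2 : X j * a = X i * b := mul_left_cancel₀ hf hab
    obtain ⟨t, ht⟩ := X_dvd_of_dvd_mul_X h ⟨b, hab2⟩
    refine ⟨t, mul_left_cancel₀ (X_ne_zero i) ?_⟩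
    rw [ha, ht]; ring

/-- Coprime two-generator case in three variables. -/
lemma key2 (f₁ f₂ g : MvPolynomial (Fin 3) ℂ) (hf₂ : f₂ ≠ 0)
    (hrel : IsRelPrime f₁ f₂)
    (h0 : X 0 * g ∈ Ideal.span {f₁, f₂})
    (h1 : X 1 * g ∈ Ideal.span {f₁, f₂})
    (h2 : X 2 * g ∈ Ideal.span {f₁, f₂}) :
    g ∈ Ideal.span {f₁, f₂} := by
  have h01 : (0 : Fin 3) ≠ 1 := by decide
  obtain ⟨a₁, a₂, ha⟩ := Ideal.mem_span_pair.mp h0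
  obtain ⟨b₁, b₂, hb⟩ := Ideal.mem_span_pair.mp h1
  obtain ⟨c₁, c₂, hc⟩ := Ideal.mem_span_pair.mp h2
  -- syzygies
  have syz_ab : (X 1*a₁ - X 0*b₁) * f₁ + (X 1*a₂ - X 0*b₂) * f₂ = 0 := by
    linear_combination X 1 * ha - X 0 * hb
  have syz_ac : (X 2*a₁ - X 0*c₁) * f₁ + (X 2*a₂ - X 0*c₂) * f₂ = 0 := by
    linear_combination X 2 * ha - X 0 * hc
  have syz_bc : (X 2*b₁ - X 1*c₁) * f₁ + (X 2*b₂ - X 1*c₂) * f₂ = 0 := by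
    linear_combination X 2 * hb - X 1 * hc
  obtain ⟨e, he⟩ := hrel.symm.dvd_of_dvd_mul_right
    (⟨-(X 1*a₂ - X 0*b₂), by linear_combination syz_ab⟩ : f₂ ∣ (X 1*a₁ - X 0*b₁) * f₁)
  obtain ⟨e', he'⟩ := hrel.symm.dvd_of_dvd_mul_right
    (⟨-(X 2*a₂ - X 0*c₂), by linear_combination syz_ac⟩ : f₂ ∣ (X 2*a₁ - X 0*c₁) * f₁)
  obtain ⟨e'', he''⟩ := hrel.symm.dvd_of_dvd_mul_right
    (⟨-(X 2*b₂ - X 1*c₂), by linear_combination syz_bc⟩ : f₂ ∣ (X 2*b₁ - X 1*c₁) * f₁)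
  have he2 : X 1*a₂ - X 0*b₂ = -(f₁ * e) := by
    refine mul_left_cancel₀ hf₂ ?_
    linear_combination syz_ab - f₁ * he
  -- Koszul relation among e, e', e''
  have hze : X 2 * e = X 1 * e' - X 0 * e'' := by
    refine mul_left_cancel₀ hf₂ ?_
    linear_combination - (X 2 * he) + X 1 * he' - X 0 * he''
  -- evaluate z ↦ 0
  have hsig : X 1 * sig 2 e' = X 0 * sig 2 e'' := by
    have := congrArg (sig 2) hze
    simp only [map_mul, map_sub, sig_X_self] at this
    rw [sig_X_ne 2 (show (1:Fin 3) ≠ 2 by decide),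
        sig_X_ne 2 (show (0:Fin 3) ≠ 2 by decide)] at this
    linear_combination -this
  obtain ⟨s, hs⟩ : X 0 ∣ sig 2 e' := X_dvd_of_dvd_mul_X h01 ⟨sig 2 e'', hsig⟩
  have hss : sig 2 s = s := by
    refine mul_left_cancel₀ (X_ne_zero (0 : Fin 3)) ?_
    have : sig 2 (sig 2 e') = sig 2 e' := sig_idem 2 e'
    rw [hs, map_mul, sig_X_ne 2 (show (0:Fin 3) ≠ 2 by decide)] at this
    exact this
  have hse'' : sig 2 e'' = X 1 * s := by
    refine mul_left_cancel₀ (X_ne_zero (0 : Fin 3)) ?_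
    rw [← hsig, hs]; ring
  obtain ⟨γ, hγ⟩ : X 2 ∣ e' - X 0 * s := by
    rw [X_dvd_iff_sig, map_sub, map_mul, hs, hss,
        sig_X_ne 2 (show (0:Fin 3) ≠ 2 by decide), sub_self]
  obtain ⟨β, hβ⟩ : X 2 ∣ e'' - X 1 * s := by
    rw [X_dvd_iff_sig, map_sub, map_mul, hse'', hss,
        sig_X_ne 2 (show (1:Fin 3) ≠ 2 by decide), sub_self]
  have he_form : e = X 1 * γ - X 0 * β := by
    refine mul_left_cancel₀ (X_ne_zero (2 : Fin 3)) ?_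
    linear_combination hze + X 1 * hγ - X 0 * hβ
  obtain ⟨t₁, ht₁⟩ : X 0 ∣ a₁ - f₂ * γ :=
    X_dvd_of_dvd_mul_X h01 ⟨b₁ - f₂ * β, by linear_combination he + f₂ * he_form⟩
  obtain ⟨t₂, ht₂⟩ : X 0 ∣ a₂ + f₁ * γ :=
    X_dvd_of_dvd_mul_X h01 ⟨b₂ + f₁ * β, by linear_combination he2 - f₁ * he_form⟩
  have hfin : X 0 * g = X 0 * (t₁ * f₁ + t₂ * f₂) := by
    linear_combination -ha + f₁ * ht₁ + f₂ * ht₂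
  exact Ideal.mem_span_pair.mpr ⟨t₁, t₂, (mul_left_cancel₀ (X_ne_zero (0 : Fin 3)) hfin).symm⟩



lemma key3 : ∀ g f₁ f₂ : MvPolynomial (Fin 3) ℂ,
    X 0 * g ∈ Ideal.span {f₁, f₂} → X 1 * g ∈ Ideal.span {f₁, f₂} →
    X 2 * g ∈ Ideal.span {f₁, f₂} → g ∈ Ideal.span {f₁, f₂} := by
  intro g
  refine (wellFounded_dvdNotUnit (α := MvPolynomial (Fin 3) ℂ)).induction
    (C := fun g => ∀ f₁ f₂ : MvPolynomial (Fin 3) ℂ,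
      X 0 * g ∈ Ideal.span {f₁, f₂} → X 1 * g ∈ Ideal.span {f₁, f₂} →
      X 2 * g ∈ Ideal.span {f₁, f₂} → g ∈ Ideal.span {f₁, f₂}) g ?_
  clear g
  intro g IH f₁ f₂ h0 h1 h2
  by_cases hg0 : g = 0
  · rw [hg0]; exact Ideal.zero_mem _
  by_cases hf₁ : f₁ = 0
  · subst hf₁
    have hspan : Ideal.span ({0, f₂} : Set (MvPolynomial (Fin 3) ℂ)) = Ideal.span {f₂} := by
      rw [Ideal.span_insert]; simp [Ideal.span_le]
    rw [hspan] at h0 h1 ⊢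
    exact key1 (show (0 : Fin 3) ≠ 1 by decide) f₂ g h0 h1
  by_cases hf₂ : f₂ = 0
  · subst hf₂
    have hspan : Ideal.span ({f₁, 0} : Set (MvPolynomial (Fin 3) ℂ)) = Ideal.span {f₁} := by
      rw [Set.pair_comm, Ideal.span_insert]; simp [Ideal.span_le]
    rw [hspan] at h0 h1 ⊢
    exact key1 (show (0 : Fin 3) ≠ 1 by decide) f₁ g h0 h1
  by_cases hcom : ∃ p : MvPolynomial (Fin 3) ℂ, Prime p ∧ p ∣ f₁ ∧ p ∣ f₂
  · obtain ⟨p, hp, hpf₁, hpf₂⟩ := hcom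
    have hpXg : ∀ k : Fin 3, X k * g ∈ Ideal.span {f₁, f₂} → p ∣ X k * g := by
      intro k hk
      obtain ⟨a, b, hab⟩ := Ideal.mem_span_pair.mp hk
      rw [← hab]; exact dvd_add (hpf₁.mul_left a) (hpf₂.mul_left b)
    have hpg : p ∣ g := by
      rcases hp.dvd_mul.mp (hpXg 0 h0) with hx | h
      · rcases hp.dvd_mul.mp (hpXg 1 h1) with hy | h
        · exfalso
          obtain ⟨c, hc⟩ := hx
          rcases (prime_X (0 : Fin 3)).irreducible.isUnit_or_isUnit hc with h' | h'
          · exact hp.not_unit h'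
          · have hassoc : Associated p (X 0 : MvPolynomial (Fin 3) ℂ) :=
              ⟨h'.unit, by rw [IsUnit.unit_spec]; exact hc.symm⟩
            exact X_not_dvd_X (show (0 : Fin 3) ≠ 1 by decide) (hassoc.symm.dvd.trans hy)
        · exact h
      · exact h
    obtain ⟨g', hg'⟩ := hpg
    obtain ⟨f₁', hf₁'⟩ := hpf₁
    obtain ⟨f₂', hf₂'⟩ := hpf₂
    have hg'0 : g' ≠ 0 := fun h => hg0 (by rw [hg', h, mul_zero])
    have hmem : ∀ k : Fin 3, X k * g ∈ Ideal.span {f₁, f₂} →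
        X k * g' ∈ Ideal.span {f₁', f₂'} := by
      intro k hk
      obtain ⟨a, b, hab⟩ := Ideal.mem_span_pair.mp hk
      refine Ideal.mem_span_pair.mpr ⟨a, b, mul_left_cancel₀ hp.ne_zero ?_⟩
      linear_combination hab - a * hf₁' - b * hf₂' + X k * hg'
    have hlt : DvdNotUnit g' g := ⟨hg'0, p, hp.not_unit, by rw [hg']; ring⟩
    obtain ⟨u, v, huv⟩ := Ideal.mem_span_pair.mp
      (IH g' hlt f₁' f₂' (hmem 0 h0) (hmem 1 h1) (hmem 2 h2))
    exact Ideal.mem_span_pair.mpr ⟨u, v, by linear_combination p * huv + u * hf₁' + v * hf₂' - hg'⟩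
  · have hrel : IsRelPrime f₁ f₂ := by
      intro d hd1 hd2
      by_contra hu
      have hd0 : d ≠ 0 := fun h => hf₁ (zero_dvd_iff.mp (h ▸ hd1))
      obtain ⟨q, hqirr, hqd⟩ := WfDvdMonoid.exists_irreducible_factor hu hd0
      exact hcom ⟨q, (UniqueFactorizationMonoid.irreducible_iff_prime.mp hqirr),
        hqd.trans hd1, hqd.trans hd2⟩
    exact key2 f₁ f₂ g hf₂ hrel h0 h1 h2

end ColonAux


/-- For `n ≤ 3`, `m ≥ 1`, if `f₁,…,f_P, g` are homogeneous of degree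
`m` in `ℂ[z₁,…,zₙ]` with `g ∉ I⁺ = ⟨f₁,…,f_P⟩` and the colon ideal `I⁺ : ⟨g⟩` equals
the homogeneous maximal ideal `𝔪 = ⟨z₁,…,zₙ⟩`, then `P ≥ n`. -/
theorem colon_maximal_forces_P_ge_n (n m P : ℕ) (hn : n ≤ 3) (hm : 1 ≤ m)
    (f : Fin P → MvPolynomial (Fin n) ℂ) (g : MvPolynomial (Fin n) ℂ)
    (hf : ∀ k, (f k).IsHomogeneous m) (hg : g.IsHomogeneous m)
    (hgI : g ∉ Ideal.span (Set.range f))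
    (hcolon : Submodule.colon (Ideal.span (Set.range f)) (Ideal.span {g}) =
      Ideal.span (Set.range (X : Fin n → MvPolynomial (Fin n) ℂ))) : n ≤ P := by
  by_contra hnP
  push_neg at hnP
  have hXg : ∀ i : Fin n, X i * g ∈ Ideal.span (Set.range f) := by
    intro i
    have hx : (X i : MvPolynomial (Fin n) ℂ) ∈
        Submodule.colon (Ideal.span (Set.range f)) (Ideal.span {g}) := by
      rw [hcolon]; exact Ideal.subset_span ⟨i, rfl⟩
    have := Submodule.mem_colon.mp hx g (Ideal.subset_span rfl)
    simpa [smul_eq_mul] using this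
  have hn1 : 1 ≤ n := by omega
  have hP2 : P ≤ 2 := by omega
  interval_cases P
  · -- P = 0
    have hr : Set.range f = (∅ : Set (MvPolynomial (Fin n) ℂ)) := Set.range_eq_empty f
    rw [hr, Ideal.span_empty] at hXg hgI
    have h0 := hXg ⟨0, by omega⟩
    rw [Ideal.mem_bot, mul_eq_zero] at h0
    rcases h0 with h0 | h0
    · exact X_ne_zero _ h0
    · exact hgI (by rw [h0]; exact Ideal.zero_mem _)
  · -- P = 1
    have hr : Set.range f = ({f 0} : Set (MvPolynomial (Fin n) ℂ)) := by
      ext x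
      constructor
      · rintro ⟨i, rfl⟩
        have : i = 0 := Subsingleton.elim i 0
        rw [this]; rfl
      · rintro rfl; exact ⟨0, rfl⟩
    rw [hr] at hXg hgI
    have hij : (⟨0, by omega⟩ : Fin n) ≠ ⟨1, by omega⟩ := by simp
    exact hgI (ColonAux.key1 hij (f 0) g (hXg ⟨0, by omega⟩) (hXg ⟨1, by omega⟩))
  · -- P = 2, so n = 3
    have hn3 : n = 3 := by omega
    subst hn3
    have hr : Set.range f = ({f 0, f 1} : Set (MvPolynomial (Fin 3) ℂ)) := by
      ext x
      constructor
      · rintro ⟨i, rfl⟩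
        fin_cases i
        · exact Or.inl rfl
        · exact Or.inr rfl
      · rintro (rfl | rfl)
        · exact ⟨0, rfl⟩
        · exact ⟨1, rfl⟩
    rw [hr] at hXg hgI
    exact hgI (ColonAux.key3 g (f 0) (f 1) (hXg 0) (hXg 1) (hXg 2))
end
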